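/- arXiv:0706.0356 — 8 statements merged into one kernel-verified Lean document; each statement's English description precedes it below -/
import Mathlib

section
/- For 0 ≤ x ≤ π/2, ∫_0^x log(tan θ) dθ = -∑_{k=0}^∞ sin((4k+2)x)/(2k+1)^2. -/
/-!
Abel summation of the Fourier series `log tan θ = -2 ∑ cos ((4k+2)θ) / (2k+1)`. For `|r| < 1`,
the real part of the series of `log (1 - w) - log (1 + w)` at `w = r e^{2iθ}` converges
absolutely, so it may be integrated termwise:
`∫₀ˣ (log |1 - r e^{2iθ}| - log |1 + r e^{2iθ}|) dθ = -∑ r^(2k+1) sin ((4k+2)x) / (2k+1)²`.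
As `r → 1⁻` the right side converges by the Weierstrass M-test, and the left side converges to
`∫₀ˣ log tan θ dθ` by dominated convergence: both `|1 ∓ r e^{2iθ}|²` lie in `[sin² 2θ, 4]`,
which gives the integrable bound `log 2 - log |sin 2θ|`.
-/

open Real MeasureTheory Filter Topology

namespace Complex

theorem hasSum_log_sub_log_of_norm_lt_one {z : ℂ} (hz : ‖z‖ < 1) :
    HasSum (fun k : ℕ => 2 * z ^ (2 * k + 1) / (2 * k + 1)) (log (1 + z) - log (1 - z)) := by
  have hall : HasSum (fun n : ℕ => z ^ n / n - (-z) ^ n / n) (-log (1 - z) - -log (1 + z)) := by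
    simpa [sub_neg_eq_add] using
      (hasSum_taylorSeries_neg_log hz).sub (hasSum_taylorSeries_neg_log (z := -z) (by simpa))
  have hodd : Function.Injective (fun k : ℕ => 2 * k + 1) := fun a b h => by simpa using h
  rw [← hodd.hasSum_iff] at hall
  · convert hall using 1
    · ext k
      simp only [pow_succ, pow_mul, pow_zero, one_mul, Function.comp_apply, Nat.cast_add,
        Nat.cast_mul, Nat.cast_ofNat, Nat.cast_one, mul_neg, neg_mul, neg_neg]
      ring
    · ring
  · intro n hn
    rcases Nat.even_or_odd' n with ⟨k, rfl | rfl⟩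
    · simp [Even.neg_pow (even_two_mul k)]
    · exact absurd ⟨k, rfl⟩ hn

theorem normSq_one_add_ofReal_mul_exp (r φ : ℝ) :
    normSq (1 + r * exp (φ * I)) = 1 + 2 * r * Real.cos φ + r ^ 2 := by
  simp only [normSq_apply, add_re, add_im, one_re, one_im, re_ofReal_mul, im_ofReal_mul,
    exp_ofReal_mul_I_re, exp_ofReal_mul_I_im]
  linear_combination r ^ 2 * Real.sin_sq_add_cos_sq φ

theorem log_re_one_add_ofReal_mul_exp (r φ : ℝ) :
    (log (1 + r * exp (φ * I))).re = Real.log (1 + 2 * r * Real.cos φ + r ^ 2) / 2 := by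
  rw [log_re, norm_def, Real.log_sqrt (normSq_nonneg _), normSq_one_add_ofReal_mul_exp]

end Complex

/-- `log |1 - r e^{2iθ}| - log |1 + r e^{2iθ}|` -/
noncomputable def logTanApprox (r θ : ℝ) : ℝ :=
  (log (1 - 2 * r * cos (2 * θ) + r ^ 2) - log (1 + 2 * r * cos (2 * θ) + r ^ 2)) / 2

theorem hasSum_logTanApprox {r : ℝ} (hr : |r| < 1) (θ : ℝ) :
    HasSum (fun k : ℕ => -(2 * r ^ (2 * k + 1) * cos ((4 * k + 2) * θ) / (2 * k + 1)))
      (logTanApprox r θ) := by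
  set w : ℂ := r * Complex.exp ((2 * θ : ℝ) * Complex.I)
  have hw : ‖w‖ = |r| := by
    rw [norm_mul, Complex.norm_exp_ofReal_mul_I, Complex.norm_real, Real.norm_eq_abs, mul_one]
  have hsum := (Complex.hasSum_re (Complex.hasSum_log_sub_log_of_norm_lt_one (hw ▸ hr))).neg
  have hval : -(Complex.log (1 + w) - Complex.log (1 - w)).re = logTanApprox r θ := by
    have h := Complex.log_re_one_add_ofReal_mul_exp (-r) (2 * θ)
    rw [Complex.ofReal_neg, neg_mul, ← sub_eq_add_neg] at h
    rw [Complex.sub_re, Complex.log_re_one_add_ofReal_mul_exp, h, logTanApprox]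
    ring_nf
  refine hval ▸ hsum.congr_fun fun k => ?_
  have hterm : 2 * w ^ (2 * k + 1) / (2 * k + 1) = ((2 * r ^ (2 * k + 1) / (2 * k + 1) : ℝ) : ℂ) *
      Complex.exp (((4 * k + 2) * θ : ℝ) * Complex.I) := by
    rw [mul_pow, ← Complex.exp_nat_mul]
    push_cast
    ring_nf
  rw [hterm, Complex.re_ofReal_mul, Complex.exp_ofReal_mul_I_re]
  ring

theorem integral_cos_mul (c x : ℝ) (hc : c ≠ 0) :
    ∫ θ in (0 : ℝ)..x, cos (c * θ) = sin (c * x) / c := by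
  rw [intervalIntegral.integral_comp_mul_left (fun θ => cos θ) hc, integral_cos]
  simp [div_eq_inv_mul]

theorem integral_logTanApprox {r : ℝ} (hr : |r| < 1) (x : ℝ) :
    ∫ θ in (0 : ℝ)..x, logTanApprox r θ =
      -∑' k : ℕ, r ^ (2 * k + 1) * sin ((4 * k + 2) * x) / (2 * k + 1) ^ 2 := by
  have hsum := intervalIntegral.hasSum_integral_of_dominated_convergence (μ := volume)
    (a := 0) (b := x)
    (F := fun (k : ℕ) θ => -(2 * r ^ (2 * k + 1) * cos ((4 * k + 2) * θ) / (2 * k + 1)))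
    (fun k _ => 2 * |r| ^ k) (fun k => (by fun_prop : Continuous _).aestronglyMeasurable)
    (fun k => ?_)
    (ae_of_all _ fun _ _ => ((summable_geometric_of_lt_one (abs_nonneg r) hr).mul_left 2))
    intervalIntegrable_const (ae_of_all _ fun θ _ => hasSum_logTanApprox hr θ)
  · rw [← tsum_neg, ← hsum.tsum_eq]
    congr 1 with k
    have hk : (4 * k + 2 : ℝ) ≠ 0 := by positivity
    rw [intervalIntegral.integral_neg, intervalIntegral.integral_div,
      intervalIntegral.integral_const_mul, integral_cos_mul _ _ hk]
    field_simp
    ring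
  · refine ae_of_all _ fun θ _ => ?_
    simp only [norm_neg, norm_div, norm_mul, norm_pow, Real.norm_eq_abs, abs_two]
    rw [abs_of_pos (by positivity : (0 : ℝ) < 2 * k + 1)]
    calc 2 * |r| ^ (2 * k + 1) * |cos ((4 * k + 2) * θ)| / (2 * k + 1)
        ≤ 2 * |r| ^ (2 * k + 1) * 1 / 1 := by
          gcongr
          · exact abs_cos_le_one _
          · linarith [(Nat.cast_nonneg k : (0 : ℝ) ≤ k)]
      _ ≤ 2 * |r| ^ k := by
          rw [mul_one, div_one]
          gcongr 2 * ?_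
          exact pow_le_pow_of_le_one (abs_nonneg r) hr.le (by omega)

theorem abs_logTanApprox_le {r θ : ℝ} (hr : |r| ≤ 1) (hθ : sin (2 * θ) ≠ 0) :
    |logTanApprox r θ| ≤ log 2 - log (sin (2 * θ)) := by
  set c := cos (2 * θ)
  set s := sin (2 * θ)
  have hcs : s ^ 2 + c ^ 2 = 1 := sin_sq_add_cos_sq _
  have hs : 0 < s ^ 2 := by positivity
  have hrc : |r * c| ≤ 1 := by
    rw [abs_mul]
    exact mul_le_one₀ hr (abs_nonneg c) (abs_cos_le_one _)
  have hr2 : r ^ 2 ≤ 1 := by rw [← sq_abs]; nlinarith [abs_nonneg r]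
  obtain ⟨hrc₁, hrc₂⟩ := abs_le.1 hrc
  have hlog {q : ℝ} (hq₁ : s ^ 2 ≤ q) (hq₂ : q ≤ 2 ^ 2) :
      log (s ^ 2) ≤ log q ∧ log q ≤ log (2 ^ 2) :=
    ⟨log_le_log hs hq₁, log_le_log (hs.trans_le hq₁) hq₂⟩
  -- `1 ∓ 2rc + r² - s² = (r ∓ c)²`
  have hm := hlog (q := 1 - 2 * r * c + r ^ 2) (by nlinarith [sq_nonneg (r - c)]) (by nlinarith)
  have hp := hlog (q := 1 + 2 * r * c + r ^ 2) (by nlinarith [sq_nonneg (r + c)]) (by nlinarith)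
  simp only [log_pow, Nat.cast_ofNat] at hm hp
  rw [logTanApprox, abs_le]
  constructor <;> linarith

theorem logTanApprox_one {θ : ℝ} (hθ : sin (2 * θ) ≠ 0) : logTanApprox 1 θ = log (tan θ) := by
  rw [sin_two_mul] at hθ
  have hsin : sin θ ≠ 0 := by intro h; simp [h] at hθ
  have hcos : cos θ ≠ 0 := by intro h; simp [h] at hθ
  have hm : 1 - 2 * 1 * cos (2 * θ) + 1 ^ 2 = (2 * sin θ) ^ 2 := by
    rw [cos_two_mul']
    linear_combination (-2) * sin_sq_add_cos_sq θ
  have hp : 1 + 2 * 1 * cos (2 * θ) + 1 ^ 2 = (2 * cos θ) ^ 2 := by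
    rw [cos_two_mul']
    linear_combination (-2) * sin_sq_add_cos_sq θ
  rw [logTanApprox, hm, hp, ← log_div (by positivity) (by positivity), ← div_pow,
    mul_div_mul_left _ _ two_ne_zero, ← tan_eq_sin_div_cos, log_pow]
  ring

theorem tendsto_logTanApprox_one {θ : ℝ} (hθ : sin (2 * θ) ≠ 0) :
    Tendsto (fun r => logTanApprox r θ) (𝓝 1) (𝓝 (log (tan θ))) := by
  have hc : |cos (2 * θ)| < 1 := by
    rw [← sq_lt_one_iff_abs_lt_one, cos_sq']
    have := pow_pos (abs_pos.2 hθ) 2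
    rw [sq_abs] at this
    linarith
  obtain ⟨hc₁, hc₂⟩ := abs_lt.1 hc
  have hcont : ContinuousAt (fun r => logTanApprox r θ) 1 := by
    unfold logTanApprox
    fun_prop (disch := linarith)
  simpa [logTanApprox_one hθ] using hcont.tendsto

theorem ae_sin_two_mul_ne_zero : ∀ᵐ θ : ℝ, sin (2 * θ) ≠ 0 := by
  refine measure_mono_null (fun θ hθ => ?_)
    ((Set.countable_range fun n : ℤ => n * π / 2).measure_zero volume)
  obtain ⟨n, hn⟩ := sin_eq_zero_iff.1 (not_not.1 hθ)
  exact ⟨n, by linarith⟩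

theorem tendsto_integral_logTanApprox (a b : ℝ) :
    Tendsto (fun r => ∫ θ in a..b, logTanApprox r θ) (𝓝[<] 1)
      (𝓝 (∫ θ in a..b, log (tan θ))) := by
  refine intervalIntegral.tendsto_integral_filter_of_dominated_convergence
    (fun θ => log 2 - log (sin (2 * θ))) (Eventually.of_forall fun r => ?_) ?_ ?_ ?_
  · exact (by unfold logTanApprox; fun_prop : Measurable (logTanApprox r)).aestronglyMeasurable
  · filter_upwards [Ioo_mem_nhdsLT (show (0 : ℝ) < 1 by norm_num)] with r hr
    filter_upwards [ae_sin_two_mul_ne_zero] with θ hθ _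
    exact abs_logTanApprox_le (abs_le.2 ⟨by linarith [hr.1], hr.2.le⟩) hθ
  · have := (intervalIntegrable_log_sin (a := 2 * a) (b := 2 * b)).comp_mul_left (c := 2)
      enorm_ne_top enorm_ne_top
    simp only [Function.comp_apply, mul_div_cancel_left₀ _ (two_ne_zero' ℝ)] at this
    exact intervalIntegrable_const.sub this
  · filter_upwards [ae_sin_two_mul_ne_zero] with θ hθ _
    exact (tendsto_logTanApprox_one hθ).mono_left nhdsWithin_le_nhds

theorem summable_one_div_two_mul_add_one_sq :
    Summable (fun k : ℕ => 1 / (2 * k + 1 : ℝ) ^ 2) := by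
  have := (Real.summable_one_div_nat_pow.2 one_lt_two).comp_injective
    (i := fun k : ℕ => 2 * k + 1) fun a b h => by simpa using h
  simpa [Function.comp_def] using this

theorem continuousOn_tsum_pow_mul_sin (x : ℝ) :
    ContinuousOn
      (fun r : ℝ => ∑' k : ℕ, r ^ (2 * k + 1) * sin ((4 * k + 2) * x) / (2 * k + 1) ^ 2)
      (Set.Icc (-1) 1) := by
  refine continuousOn_tsum (fun k => by fun_prop) summable_one_div_two_mul_add_one_sq
    fun k r hr => ?_
  rw [norm_div, norm_mul, norm_pow, Real.norm_eq_abs, Real.norm_eq_abs, Real.norm_eq_abs,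
    abs_of_pos (by positivity : (0 : ℝ) < (2 * k + 1) ^ 2)]
  gcongr
  exact mul_le_one₀ (pow_le_one₀ (abs_nonneg r) (abs_le.2 hr)) (abs_nonneg _) (abs_sin_le_one _)

theorem stmt1_general (x : ℝ) :
    (∫ θ in (0:ℝ)..x, Real.log (Real.tan θ)) =
      -∑' k : ℕ, Real.sin ((4 * k + 2) * x) / (2 * k + 1) ^ 2 := by
  have hseries := ((continuousOn_tsum_pow_mul_sin x 1 (by norm_num)).mono_of_mem_nhdsWithin
    (Icc_mem_nhdsLT (by norm_num))).tendsto.neg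
  simp only [one_pow, one_mul] at hseries
  refine tendsto_nhds_unique (tendsto_integral_logTanApprox 0 x) (hseries.congr' ?_)
  filter_upwards [Ioo_mem_nhdsLT (show (-1 : ℝ) < 1 by norm_num)] with r hr
  exact (integral_logTanApprox (abs_lt.2 hr) x).symm

theorem stmt1 (x : ℝ) (hx0 : 0 ≤ x) (hx1 : x ≤ π / 2) :
    (∫ θ in (0:ℝ)..x, Real.log (Real.tan θ)) =
      -∑' k : ℕ, Real.sin ((4 * k + 2) * x) / (2 * k + 1) ^ 2 :=
  stmt1_general x
end

section
/- For 0 ≤ x ≤ π/4, ∫_0^x log(tan θ) dθ = x·log(tan x) - (1/4)·∑_{k=0}^∞ (2 sin 2x)^{2k+1} / ((2k+1)^2 · C(2k,k)), where C(2k,k) is the central binomial coefficient. At x = 0 the term x·log(tan x) is interpreted as 0. -/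
/-!
With `S x = ∑ (2 sin 2x)^(2k+1) / ((2k+1)² C(2k,k))`, the function `x log tan x - S x / 4` is a
primitive of `log tan x` on `(0, π/4)`: termwise differentiation gives `S' x = 8x / sin 2x`, which
reduces to the identity `∑ (2 sin t)^(2k+1) cos t / ((2k+1) C(2k,k)) = 2t` for `|t| < π/2`. That
identity holds at `t = 0`, and the derivative of its `k`-th term is `2 (a k - a (k+1))` with
`a k = (2 sin t)^(2k) / C(2k,k)`, so the derivative of the sum telescopes to `2 a 0 = 2`.

The primitive extends continuously to `[0, π/4]`: `x log tan x → 0` since `x ≤ tan x ≤ 1`, and the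
series converges uniformly for `|2 sin 2x| ≤ 2` since `C(2k,k) ≥ 4^k / √(4k+1)`. As `log tan ≤ 0`
there, it is integrable and the fundamental theorem of calculus applies on `[0, x]`.
-/

open Real Set Filter Topology

theorem Nat.sixteen_pow_le_four_mul_add_one_mul_centralBinom_sq (n : ℕ) :
    16 ^ n ≤ (4 * n + 1) * n.centralBinom ^ 2 := by
  induction n with
  | zero => simp
  | succ n ih =>
    have hrec := Nat.succ_mul_centralBinom_succ n
    refine Nat.le_of_mul_le_mul_left ?_ (by positivity : 0 < (n + 1) ^ 2)
    calc (n + 1) ^ 2 * 16 ^ (n + 1) = 16 * (n + 1) ^ 2 * 16 ^ n := by ring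
      _ ≤ 16 * (n + 1) ^ 2 * ((4 * n + 1) * n.centralBinom ^ 2) := Nat.mul_le_mul_left _ ih
      _ ≤ (4 * (n + 1) + 1) * (2 * (2 * n + 1) * n.centralBinom) ^ 2 := by
          nlinarith [Nat.zero_le (n.centralBinom ^ 2)]
      _ = (n + 1) ^ 2 * ((4 * (n + 1) + 1) * (n + 1).centralBinom ^ 2) := by
          rw [← hrec]; ring

theorem cast_centralBinom_pos (n : ℕ) : (0 : ℝ) < n.centralBinom := by
  exact_mod_cast n.centralBinom_pos

theorem four_pow_div_centralBinom_le (n : ℕ) : (4 : ℝ) ^ n / n.centralBinom ≤ 2 * n + 1 := by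
  rw [div_le_iff₀ (cast_centralBinom_pos n)]
  exact_mod_cast Nat.centralBinom_eq_two_mul_choose n ▸
    Nat.four_pow_le_two_mul_add_one_mul_central_binom n

theorem four_pow_div_centralBinom_le_sqrt (n : ℕ) :
    (4 : ℝ) ^ n / n.centralBinom ≤ √(4 * n + 1) := by
  have hC := cast_centralBinom_pos n
  have h : ((16 ^ n : ℕ) : ℝ) ≤ ((4 * n + 1) * n.centralBinom ^ 2 : ℕ) :=
    by exact_mod_cast Nat.sixteen_pow_le_four_mul_add_one_mul_centralBinom_sq n
  rw [Real.le_sqrt (by positivity) (by positivity), div_pow, div_le_iff₀ (by positivity)]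
  push_cast at h
  calc ((4 : ℝ) ^ n) ^ 2 = 16 ^ n := by rw [← pow_mul, mul_comm, pow_mul]; norm_num
    _ ≤ _ := h

theorem summable_two_pow_div_sq_mul_centralBinom :
    Summable fun k : ℕ => (2 : ℝ) ^ (2 * k + 1) / ((2 * k + 1) ^ 2 * k.centralBinom) := by
  refine ((Real.summable_one_div_nat_add_rpow (1 / 2) (3 / 2)).2 (by norm_num)).of_nonneg_of_le
    (fun k => by positivity) fun k => ?_
  set a : ℝ := k + 1 / 2
  have ha : 0 < a := by positivity
  have hsqrt : √(4 * k + 1) ≤ 2 * √a := by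
    rw [Real.sqrt_le_left (by positivity), mul_pow, Real.sq_sqrt ha.le]
    simp only [a]
    linarith
  have hpow : |a| ^ (3 / 2 : ℝ) = a * √a := by
    rw [abs_of_pos ha, Real.sqrt_eq_rpow, ← Real.rpow_one_add' ha.le (by norm_num)]
    norm_num
  calc (2 : ℝ) ^ (2 * k + 1) / ((2 * k + 1) ^ 2 * k.centralBinom)
      = 2 * ((4 : ℝ) ^ k / k.centralBinom) / (4 * a ^ 2) := by
        have := cast_centralBinom_pos k
        rw [pow_succ, pow_mul]; simp only [a]; field_simp; ring
    _ ≤ 2 * (2 * √a) / (4 * a ^ 2) := by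
        gcongr; exact (four_pow_div_centralBinom_le_sqrt k).trans hsqrt
    _ = 1 / |a| ^ (3 / 2 : ℝ) := by
        rw [hpow]; field_simp; rw [Real.sq_sqrt ha.le]; ring

noncomputable def centralBinomSeries (z : ℝ) : ℝ :=
  ∑' k : ℕ, z ^ (2 * k + 1) / ((2 * k + 1) ^ 2 * k.centralBinom)

noncomputable def centralBinomSeriesDeriv (z : ℝ) : ℝ :=
  ∑' k : ℕ, z ^ (2 * k) / ((2 * k + 1) * k.centralBinom)

theorem continuousOn_centralBinomSeries : ContinuousOn centralBinomSeries (Icc (-2) 2) := by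
  refine continuousOn_tsum (fun k => by fun_prop) summable_two_pow_div_sq_mul_centralBinom
    fun k z hz => ?_
  have hd : (0 : ℝ) < (2 * k + 1) ^ 2 * k.centralBinom := by
    have := cast_centralBinom_pos k; positivity
  rw [norm_div, norm_pow, Real.norm_of_nonneg hd.le, Real.norm_eq_abs]
  gcongr
  exact abs_le.2 hz

theorem hasDerivAt_centralBinomSeries {z : ℝ} (hz : |z| < 2) :
    HasDerivAt centralBinomSeries (centralBinomSeriesDeriv z) z := by
  obtain ⟨r, hzr, hr⟩ := exists_between hz
  have hr0 : 0 < r := (abs_nonneg z).trans_lt hzr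
  have hterm (k : ℕ) (w : ℝ) :
      HasDerivAt (fun z : ℝ => z ^ (2 * k + 1) / ((2 * k + 1) ^ 2 * k.centralBinom))
      (w ^ (2 * k) / ((2 * k + 1) * k.centralBinom)) w := by
    have hC := cast_centralBinom_pos k
    refine ((hasDerivAt_pow (2 * k + 1) w).div_const _).congr_deriv ?_
    rw [Nat.add_sub_cancel]
    push_cast
    field_simp
  have hbound (k : ℕ) (w : ℝ) (hw : w ∈ Ioo (-r) r) :
      ‖w ^ (2 * k) / ((2 * k + 1) * k.centralBinom)‖ ≤ (r ^ 2 / 4) ^ k := by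
    have hC := cast_centralBinom_pos k
    have hd : (0 : ℝ) < (2 * k + 1) * k.centralBinom := by positivity
    have hw' : w ^ 2 ≤ r ^ 2 := sq_le_sq' hw.1.le hw.2.le
    rw [norm_div, Real.norm_of_nonneg hd.le, Real.norm_of_nonneg ((even_two_mul k).pow_nonneg w),
      div_le_iff₀ hd, pow_mul]
    calc (w ^ 2) ^ k ≤ (r ^ 2) ^ k := by gcongr
      _ = (r ^ 2 / 4) ^ k * 4 ^ k := by rw [div_pow, div_mul_cancel₀ _ (by positivity)]
      _ ≤ (r ^ 2 / 4) ^ k * ((2 * k + 1) * k.centralBinom) := by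
        gcongr
        exact (div_le_iff₀ hC).1 (four_pow_div_centralBinom_le k)
  exact hasDerivAt_tsum_of_isPreconnected
    (summable_geometric_of_lt_one (by positivity) (by nlinarith)) isOpen_Ioo
    isPreconnected_Ioo (fun k w _ => hterm k w) hbound (y₀ := 0) ⟨by linarith, hr0⟩
    (by simp) (abs_lt.1 hzr)

theorem sin_sq_le_sin_sq_of_abs_le {θ b : ℝ} (h : |θ| ≤ b) (hb : b ≤ π / 2) :
    sin θ ^ 2 ≤ sin b ^ 2 := by
  have hcos : cos b ≤ cos θ :=
    cos_abs θ ▸ cos_le_cos_of_nonneg_of_le_pi (abs_nonneg θ) (by linarith [pi_pos]) h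
  have hcos0 : 0 ≤ cos b := cos_nonneg_of_mem_Icc ⟨by linarith [abs_nonneg θ, pi_pos], hb⟩
  nlinarith [sin_sq_add_cos_sq θ, sin_sq_add_cos_sq b]

theorem sin_sq_lt_one_of_mem_Ioo {t : ℝ} (ht : t ∈ Ioo (-(π / 2)) (π / 2)) : sin t ^ 2 < 1 := by
  nlinarith [sin_sq_add_cos_sq t, cos_pos_of_mem_Ioo ht]

theorem abs_two_sin_pow_div_centralBinom_le {t q : ℝ} (h : sin t ^ 2 ≤ q) (k : ℕ) :
    |(2 * sin t) ^ (2 * k) / k.centralBinom| ≤ (2 * k + 1) * q ^ k := by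
  have hC := cast_centralBinom_pos k
  have hq0 : 0 ≤ q := (sq_nonneg _).trans h
  rw [abs_div, abs_of_pos hC, pow_mul, mul_pow, abs_of_nonneg (by positivity), div_le_iff₀ hC]
  calc (2 ^ 2 * sin t ^ 2) ^ k ≤ (4 * q) ^ k := by gcongr; norm_num
    _ = 4 ^ k / k.centralBinom * q ^ k * k.centralBinom := by
      rw [mul_pow]; field_simp
    _ ≤ (2 * k + 1) * q ^ k * k.centralBinom := by
      gcongr; exact four_pow_div_centralBinom_le k

theorem summable_two_mul_add_one_mul_pow {q : ℝ} (hq0 : 0 ≤ q) (hq : q < 1) :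
    Summable fun k : ℕ => (2 * k + 1) * q ^ k := by
  have hnorm : ‖q‖ < 1 := by rwa [Real.norm_of_nonneg hq0]
  simpa [add_mul, mul_assoc] using
    ((summable_pow_mul_geometric_of_norm_lt_one 1 hnorm).mul_left 2).add
      (summable_geometric_of_lt_one hq0 hq)

theorem hasDerivAt_two_sin_pow_mul_cos (k : ℕ) (t : ℝ) :
    HasDerivAt (fun t => (2 * sin t) ^ (2 * k + 1) * cos t / ((2 * k + 1) * k.centralBinom))
      (2 * ((2 * sin t) ^ (2 * k) / k.centralBinom -
        (2 * sin t) ^ (2 * (k + 1)) / (k + 1).centralBinom)) t := by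
  have hC := cast_centralBinom_pos k
  have hC' := cast_centralBinom_pos (k + 1)
  have hrec : ((k : ℝ) + 1) * (k + 1).centralBinom = 2 * (2 * k + 1) * k.centralBinom := by
    exact_mod_cast Nat.succ_mul_centralBinom_succ k
  refine ((((hasDerivAt_sin t).const_mul 2).pow (2 * k + 1)).mul (hasDerivAt_cos t)
    |>.div_const _).congr_deriv ?_
  simp only [Pi.pow_apply, Nat.add_sub_cancel]
  field_simp
  push_cast
  linear_combination (2 * sin t) ^ (2 * k) * (4 * k + 2) * ((k + 1).centralBinom : ℝ) *
    sin_sq_add_cos_sq t - 4 * (2 * sin t) ^ (2 * k) * sin t ^ 2 * hrec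

theorem hasDerivAt_tsum_two_sin_pow_mul_cos {t : ℝ} (ht : t ∈ Ioo (-(π / 2)) (π / 2)) :
    HasDerivAt (fun t => ∑' k : ℕ,
      (2 * sin t) ^ (2 * k + 1) * cos t / ((2 * k + 1) * k.centralBinom)) 2 t := by
  obtain ⟨b, htb, hb⟩ := exists_between (abs_lt.2 ht)
  have hq : sin b ^ 2 < 1 := sin_sq_lt_one_of_mem_Ioo ⟨by linarith [abs_nonneg t], hb⟩
  have hsum := summable_two_mul_add_one_mul_pow (sq_nonneg _) hq
  have hbound (k : ℕ) (θ : ℝ) (hθ : θ ∈ Ioo (-b) b) :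
      ‖2 * ((2 * sin θ) ^ (2 * k) / k.centralBinom -
        (2 * sin θ) ^ (2 * (k + 1)) / (k + 1).centralBinom)‖ ≤
      2 * ((2 * k + 1) * (sin b ^ 2) ^ k +
        (2 * ((k + 1 : ℕ) : ℝ) + 1) * (sin b ^ 2) ^ (k + 1)) := by
    have hθb := sin_sq_le_sin_sq_of_abs_le (abs_lt.2 hθ).le hb.le
    rw [norm_mul, Real.norm_two, Real.norm_eq_abs]
    gcongr
    exact (abs_sub _ _).trans (add_le_add (abs_two_sin_pow_div_centralBinom_le hθb k)
      (abs_two_sin_pow_div_centralBinom_le hθb (k + 1)))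
  have hderiv := hasDerivAt_tsum_of_isPreconnected
    ((hsum.add ((summable_nat_add_iff 1).2 hsum)).mul_left 2) isOpen_Ioo isPreconnected_Ioo
    (fun k θ _ => hasDerivAt_two_sin_pow_mul_cos k θ) hbound (y₀ := 0)
    ⟨by linarith [abs_nonneg t], by linarith [abs_nonneg t]⟩ (by simp) (abs_lt.1 htb)
  have ha : Summable fun k : ℕ => (2 * sin t) ^ (2 * k) / k.centralBinom :=
    .of_norm_bounded (summable_two_mul_add_one_mul_pow (sq_nonneg _) (sin_sq_lt_one_of_mem_Ioo ht))
      fun k => abs_two_sin_pow_div_centralBinom_le le_rfl k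
  rw [tsum_mul_left, ha.tsum_sub ((summable_nat_add_iff 1).2 ha), ha.tsum_eq_zero_add] at hderiv
  simpa using hderiv

/-- With `w = sin t`, this is the Taylor series `∑ 4^k w^(2k+1) / ((2k+1) C(2k,k))` of
`arcsin w / √(1 - w²)`, multiplied by `2 cos t`. -/
theorem tsum_two_sin_pow_mul_cos {t : ℝ} (ht : t ∈ Ioo (-(π / 2)) (π / 2)) :
    ∑' k : ℕ, (2 * sin t) ^ (2 * k + 1) * cos t / ((2 * k + 1) * k.centralBinom) = 2 * t := by
  have h0 : (0 : ℝ) ∈ Ioo (-(π / 2)) (π / 2) := ⟨by linarith [pi_pos], by linarith [pi_pos]⟩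
  refine isOpen_Ioo.eqOn_of_deriv_eq isPreconnected_Ioo
    (fun s hs => (hasDerivAt_tsum_two_sin_pow_mul_cos hs).differentiableAt.differentiableWithinAt)
    (by fun_prop) (fun s hs => ?_) h0 (by simp) ht
  simp [(hasDerivAt_tsum_two_sin_pow_mul_cos hs).deriv]

theorem two_sin_mul_centralBinomSeriesDeriv {t : ℝ} (ht : t ∈ Ioo (-(π / 2)) (π / 2)) :
    2 * sin t * centralBinomSeriesDeriv (2 * sin t) * cos t = 2 * t := by
  rw [← tsum_two_sin_pow_mul_cos ht, centralBinomSeriesDeriv, ← tsum_mul_left, ← tsum_mul_right]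
  exact tsum_congr fun k => by ring

theorem integral_eq_sub_of_hasDerivAt_of_nonpos {f f' : ℝ → ℝ} {a b : ℝ} (hab : a ≤ b)
    (hcont : ContinuousOn f (Icc a b)) (hderiv : ∀ x ∈ Ioo a b, HasDerivAt f (f' x) x)
    (hf' : ∀ x ∈ Ioo a b, f' x ≤ 0) : ∫ x in a..b, f' x = f b - f a := by
  refine intervalIntegral.integral_eq_sub_of_hasDerivAt_of_le hab hcont hderiv ?_
  rw [intervalIntegrable_iff_integrableOn_Ioc_of_le hab]
  simpa using (intervalIntegral.integrableOn_deriv_of_nonneg hcont.neg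
    (fun x hx => (hderiv x hx).neg) fun x hx => neg_nonneg.2 (hf' x hx)).neg

theorem tan_le_one_of_nonneg_of_le_pi_div_four {x : ℝ} (hx0 : 0 ≤ x) (hx : x ≤ π / 4) :
    tan x ≤ 1 :=
  tan_pi_div_four ▸ strictMonoOn_tan.monotoneOn ⟨by linarith [pi_pos], by linarith [pi_pos]⟩
    ⟨by linarith [pi_pos], by linarith [pi_pos]⟩ hx

theorem log_tan_nonpos {x : ℝ} (hx0 : 0 ≤ x) (hx : x ≤ π / 4) : log (tan x) ≤ 0 :=
  log_nonpos (tan_nonneg_of_nonneg_of_le_pi_div_two hx0 (by linarith [pi_pos]))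
    (tan_le_one_of_nonneg_of_le_pi_div_four hx0 hx)

theorem abs_log_tan_le_abs_log {x : ℝ} (hx0 : 0 ≤ x) (hx : x ≤ π / 4) :
    |log (tan x)| ≤ |log x| := by
  rcases hx0.eq_or_lt with rfl | hx0
  · simp
  have := log_le_log hx0 (le_tan hx0.le (by linarith [pi_pos]))
  rw [abs_of_nonpos (log_tan_nonpos hx0.le hx)]
  linarith [neg_abs_le (log x)]

theorem continuousOn_mul_log_tan : ContinuousOn (fun x => x * log (tan x)) (Icc 0 (π / 4)) := by
  intro x hx
  rcases hx.1.eq_or_lt with rfl | hx0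
  · refine squeeze_zero_norm' ?_ ((continuous_mul_log.abs.tendsto' 0 0 (by simp)).mono_left
      nhdsWithin_le_nhds) |>.trans_eq (by simp)
    filter_upwards [self_mem_nhdsWithin] with y hy
    rw [Real.norm_eq_abs, abs_mul, abs_mul]
    exact mul_le_mul_of_nonneg_left (abs_log_tan_le_abs_log hy.1 hy.2) (abs_nonneg y)
  · have hcos : cos x ≠ 0 := (cos_pos_of_mem_Ioo ⟨by linarith [pi_pos], by linarith [hx.2]⟩).ne'
    have htan : tan x ≠ 0 := (tan_pos_of_pos_of_lt_pi_div_two hx0 (by linarith [hx.2])).ne'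
    exact (continuousAt_id.mul ((continuousAt_tan.2 hcos).log htan)).continuousWithinAt

noncomputable def logTanPrimitive (x : ℝ) : ℝ :=
  x * log (tan x) - 1 / 4 * centralBinomSeries (2 * sin (2 * x))

theorem continuousOn_logTanPrimitive : ContinuousOn logTanPrimitive (Icc 0 (π / 4)) := by
  refine continuousOn_mul_log_tan.sub (continuous_const.mul ?_).continuousOn
  exact continuousOn_centralBinomSeries.comp_continuous (by fun_prop) fun x =>
    ⟨by linarith [neg_one_le_sin (2 * x)], by linarith [sin_le_one (2 * x)]⟩

theorem hasDerivAt_logTanPrimitive {x : ℝ} (hx : x ∈ Ioo 0 (π / 4)) :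
    HasDerivAt logTanPrimitive (log (tan x)) x := by
  obtain ⟨hx0, hx1⟩ := hx
  have hcos : 0 < cos x := cos_pos_of_mem_Ioo ⟨by linarith, by linarith⟩
  have hsin : 0 < sin x := sin_pos_of_pos_of_lt_pi hx0 (by linarith)
  have htan : 0 < tan x := tan_pos_of_pos_of_lt_pi_div_two hx0 (by linarith)
  have h2x : 2 * x ∈ Ioo (-(π / 2)) (π / 2) := ⟨by linarith, by linarith⟩
  have hz : |2 * sin (2 * x)| < 2 := by
    have := sin_sq_lt_one_of_mem_Ioo h2x
    rw [abs_mul, abs_two]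
    linarith [(sq_lt_one_iff_abs_lt_one _).1 this]
  have hS := (hasDerivAt_centralBinomSeries hz).comp x
    (((hasDerivAt_id x).const_mul 2).sin.const_mul 2)
  have hL := (hasDerivAt_id x).mul ((hasDerivAt_tan hcos.ne').log htan.ne')
  refine (hL.sub (hS.const_mul (1 / 4))).congr_deriv ?_
  have hid := two_sin_mul_centralBinomSeriesDeriv h2x
  have hsin2 := sin_two_mul x
  simp only [id, tan_eq_sin_div_cos] at htan ⊢
  set D := centralBinomSeriesDeriv (2 * sin (2 * x))
  set s2 := sin (2 * x)
  set c2 := cos (2 * x)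
  field_simp
  linear_combination -hid + 2 * D * c2 * hsin2

theorem stmt2 (x : ℝ) (hx0 : 0 ≤ x) (hx1 : x ≤ π / 4) :
    (∫ θ in (0:ℝ)..x, Real.log (Real.tan θ)) =
      x * Real.log (Real.tan x) -
        (1 / 4) * ∑' k : ℕ,
          (2 * Real.sin (2 * x)) ^ (2 * k + 1) /
            ((2 * k + 1) ^ 2 * (Nat.choose (2 * k) k : ℝ)) := by
  rw [integral_eq_sub_of_hasDerivAt_of_nonpos hx0
    (continuousOn_logTanPrimitive.mono (Icc_subset_Icc_right hx1))
    (fun y hy => hasDerivAt_logTanPrimitive ⟨hy.1, hy.2.trans_le hx1⟩)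
    (fun y hy => log_tan_nonpos hy.1.le (hy.2.le.trans hx1))]
  simp [logTanPrimitive, centralBinomSeries, Nat.centralBinom_eq_two_mul_choose]
end

section
/- For |t| < 1, the power series identity 2t·arcsin(t)/√(1-t²) = ∑_{k=1}^∞ (2t)^{2k} / (k·C(2k,k)) holds. -/
/-!
Since `1 / ((k + 1) * C(2k+2, k+1)) = B(k + 1, k + 2) = ∫₀¹ x ^ k (1 - x) ^ (k + 1) dx`,
the series is `∫₀¹ ∑ₖ (4t²) ^ (k + 1) x ^ k (1 - x) ^ (k + 1) dx`. On `[0, 1]` the ratio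
`4t² x (1 - x)` is at most `t² < 1`, so the geometric series converges dominatedly, to
`4t² (1 - x) / (1 - 4t² x (1 - x))`. With `s = √(1 - t²)` the denominator is
`(2tx - t)² + s²`, so the integrand has the elementary primitive
`-½ log (1 - 4t² x (1 - x)) + (t / s) arctan ((2tx - t) / s)`, and `arctan (t / s) = arcsin t`.
-/

open Real intervalIntegral
open scoped Nat

theorem mul_one_sub_le_one_fourth (x : ℝ) : x * (1 - x) ≤ 1 / 4 := by
  nlinarith [sq_nonneg (x - 1 / 2)]

theorem integral_pow_mul_one_sub_pow_succ (m n : ℕ) :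
    (m + 1 : ℝ) * ∫ x in (0:ℝ)..1, x ^ m * (1 - x) ^ (n + 1) =
      (n + 1) * ∫ x in (0:ℝ)..1, x ^ (m + 1) * (1 - x) ^ n := by
  have hderiv (x : ℝ) : HasDerivAt (fun x => x ^ (m + 1) * (1 - x) ^ (n + 1))
      ((m + 1) * (x ^ m * (1 - x) ^ (n + 1)) - (n + 1) * (x ^ (m + 1) * (1 - x) ^ n)) x := by
    have h1 : HasDerivAt (fun x : ℝ => (1 - x) ^ (n + 1))
        ((n + 1 : ℕ) * (1 - x) ^ n * (-1)) x :=
      ((hasDerivAt_id x).const_sub 1).pow (n + 1)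
    refine ((hasDerivAt_pow (m + 1) x).mul h1).congr_deriv ?_
    push_cast
    ring
  have hint := integral_eq_sub_of_hasDerivAt (fun x _ => hderiv x)
    (Continuous.intervalIntegrable (by fun_prop) 0 1)
  rw [integral_sub (Continuous.intervalIntegrable (by fun_prop) 0 1)
    (Continuous.intervalIntegrable (by fun_prop) 0 1),
    integral_const_mul, integral_const_mul] at hint
  simpa [sub_eq_zero] using hint

theorem integral_pow_mul_one_sub_pow (m n : ℕ) :
    ∫ x in (0:ℝ)..1, x ^ m * (1 - x) ^ n = (m ! * n ! : ℝ) / (m + n + 1)! := by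
  induction n generalizing m with
  | zero => simp [Nat.factorial_succ]; field_simp
  | succ n ih =>
    have h := integral_pow_mul_one_sub_pow_succ m n
    rw [ih, show m + 1 + n + 1 = m + (n + 1) + 1 by omega] at h
    rw [eq_div_iff (by positivity)]
    have hm : (m + 1 : ℝ) ≠ 0 := by positivity
    apply mul_left_cancel₀ hm
    rw [← mul_assoc, h]
    push_cast [Nat.factorial_succ]
    field_simp

theorem integral_pow_mul_one_sub_pow_succ_self (k : ℕ) :
    ∫ x in (0:ℝ)..1, x ^ k * (1 - x) ^ (k + 1) =
      1 / ((k + 1) * ((2 * (k + 1)).choose (k + 1) : ℝ)) := by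
  have h := Nat.add_choose_mul_factorial_mul_factorial (k + 1) (k + 1)
  rw [← two_mul] at h
  rw [integral_pow_mul_one_sub_pow, show k + (k + 1) + 1 = 2 * (k + 1) by omega, ← h]
  have : ((2 * (k + 1)).choose (k + 1) : ℝ) ≠ 0 := by
    exact_mod_cast (Nat.choose_pos (by omega)).ne'
  push_cast [Nat.factorial_succ]
  field_simp

theorem hasDerivAt_log_add_arctan {t s : ℝ} (hs : s ^ 2 = 1 - t ^ 2) (hs0 : s ≠ 0) (x : ℝ) :
    HasDerivAt (fun x => -(1 / 2) * log (1 - 4 * t ^ 2 * (x * (1 - x))) +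
        t / s * arctan ((2 * t * x - t) / s))
      (4 * t ^ 2 * (1 - x) / (1 - 4 * t ^ 2 * (x * (1 - x)))) x := by
  have hD : 1 - 4 * t ^ 2 * (x * (1 - x)) = (2 * t * x - t) ^ 2 + s ^ 2 := by rw [hs]; ring
  have hDpos : 0 < 1 - 4 * t ^ 2 * (x * (1 - x)) := by rw [hD]; positivity
  have hlin : HasDerivAt (fun x => 2 * t * x - t) (2 * t) x := by
    simpa using ((hasDerivAt_id x).const_mul (2 * t)).sub_const t
  have hquad : HasDerivAt (fun x => 1 - 4 * t ^ 2 * (x * (1 - x)))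
      (-4 * t ^ 2 * (1 - 2 * x)) x := by
    refine ((((hasDerivAt_id x).mul ((hasDerivAt_id x).const_sub 1)).const_mul
      (4 * t ^ 2)).const_sub 1).congr_deriv ?_
    simp only [id]
    ring
  refine ((hquad.log hDpos.ne').const_mul _ |>.add
    ((hlin.div_const s).arctan.const_mul _)).congr_deriv ?_
  rw [hD] at hDpos ⊢
  have h1 : 1 + ((2 * t * x - t) / s) ^ 2 = ((2 * t * x - t) ^ 2 + s ^ 2) / s ^ 2 := by
    field_simp
    ring
  rw [h1]
  field_simp
  ring

theorem integral_eq_two_mul_arcsin_div_sqrt {t : ℝ} (ht : |t| < 1) :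
    ∫ x in (0:ℝ)..1, 4 * t ^ 2 * (1 - x) / (1 - 4 * t ^ 2 * (x * (1 - x))) =
      2 * t * arcsin t / √(1 - t ^ 2) := by
  have ht2 : 0 < 1 - t ^ 2 := sub_pos.2 ((sq_lt_one_iff_abs_lt_one t).2 ht)
  have hs : √(1 - t ^ 2) ^ 2 = 1 - t ^ 2 := sq_sqrt ht2.le
  have hcont : Continuous fun x => 4 * t ^ 2 * (1 - x) / (1 - 4 * t ^ 2 * (x * (1 - x))) := by
    fun_prop (disch := intro x; nlinarith [mul_one_sub_le_one_fourth x])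
  rw [integral_eq_sub_of_hasDerivAt
    (fun x _ => hasDerivAt_log_add_arctan hs (sqrt_pos.2 ht2).ne' x) (hcont.intervalIntegrable 0 1),
    arcsin_eq_arctan (abs_lt.1 ht)]
  simp only [mul_one, mul_zero, sub_self, sub_zero, zero_sub, two_mul, add_sub_cancel_right,
    neg_div, arctan_neg]
  ring

theorem hasSum_pow_succ_mul_pow_mul_one_sub_pow_succ {a x : ℝ} (h : |a * (x * (1 - x))| < 1) :
    HasSum (fun k : ℕ => a ^ (k + 1) * (x ^ k * (1 - x) ^ (k + 1)))
      (a * (1 - x) / (1 - a * (x * (1 - x)))) := by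
  have hterm : (fun k : ℕ => a ^ (k + 1) * (x ^ k * (1 - x) ^ (k + 1))) =
      fun k => a * (1 - x) * (a * (x * (1 - x))) ^ k := by
    ext k
    simp only [mul_pow, pow_succ]
    ring
  rw [hterm, div_eq_mul_inv]
  exact (hasSum_geometric_of_abs_lt_one h).mul_left _

theorem abs_pow_succ_mul_pow_mul_one_sub_pow_succ_le {a x : ℝ} (ha : 0 ≤ a)
    (hx : x ∈ Set.Icc (0:ℝ) 1) (k : ℕ) :
    |a ^ (k + 1) * (x ^ k * (1 - x) ^ (k + 1))| ≤ a * (a / 4) ^ k := by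
  obtain ⟨hx0, hx1⟩ := hx
  have hx1' : 0 ≤ 1 - x := sub_nonneg.2 hx1
  calc |a ^ (k + 1) * (x ^ k * (1 - x) ^ (k + 1))|
      = a * (1 - x) * (a * (x * (1 - x))) ^ k := by
        rw [abs_of_nonneg (by positivity)]
        simp only [mul_pow, pow_succ]
        ring
    _ ≤ a * 1 * (a * (1 / 4)) ^ k := by
        gcongr
        · linarith
        · exact mul_one_sub_le_one_fourth x
    _ = a * (a / 4) ^ k := by ring

theorem stmt3 (t : ℝ) (ht : |t| < 1) :
    2 * t * Real.arcsin t / Real.sqrt (1 - t ^ 2) =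
      ∑' k : ℕ, (2 * t) ^ (2 * (k + 1)) /
        ((k + 1) * (Nat.choose (2 * (k + 1)) (k + 1) : ℝ)) := by
  have ht2 : t ^ 2 < 1 := (sq_lt_one_iff_abs_lt_one t).2 ht
  have hterm (k : ℕ) : ∫ x in (0:ℝ)..1, (4 * t ^ 2) ^ (k + 1) * (x ^ k * (1 - x) ^ (k + 1)) =
      (2 * t) ^ (2 * (k + 1)) / ((k + 1) * ((2 * (k + 1)).choose (k + 1) : ℝ)) := by
    rw [integral_const_mul, integral_pow_mul_one_sub_pow_succ_self, pow_mul]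
    ring
  have hIcc {x : ℝ} (hx : x ∈ Set.uIoc (0:ℝ) 1) : x ∈ Set.Icc (0:ℝ) 1 := by
    rw [Set.uIoc_of_le zero_le_one] at hx
    exact Set.Ioc_subset_Icc_self hx
  have hratio {x : ℝ} (hx : x ∈ Set.Icc (0:ℝ) 1) : |4 * t ^ 2 * (x * (1 - x))| < 1 := by
    have hq : 0 ≤ x * (1 - x) := mul_nonneg hx.1 (sub_nonneg.2 hx.2)
    rw [abs_of_nonneg (by positivity)]
    nlinarith [mul_one_sub_le_one_fourth x]
  have hsum := hasSum_integral_of_dominated_convergence (μ := MeasureTheory.volume)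
    (fun k _ => 4 * t ^ 2 * (4 * t ^ 2 / 4) ^ k)
    (fun k => Continuous.aestronglyMeasurable (by fun_prop))
    (fun k => MeasureTheory.ae_of_all _ fun x hx =>
      abs_pow_succ_mul_pow_mul_one_sub_pow_succ_le (by positivity) (hIcc hx) k)
    (MeasureTheory.ae_of_all _ fun x _ =>
      (summable_geometric_of_lt_one (by positivity) (by linarith)).mul_left _)
    intervalIntegrable_const
    (MeasureTheory.ae_of_all _ fun x hx =>
      hasSum_pow_succ_mul_pow_mul_one_sub_pow_succ (hratio (hIcc hx)))
  rw [← integral_eq_two_mul_arcsin_div_sqrt ht, ← hsum.tsum_eq]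
  exact tsum_congr hterm
end

section
/- Let m = 2n+1 be an odd positive integer and let x be a real number such that all the tangents involved are defined. Then tan(mx)/tan(x) = ∏_{j=1}^n tan(jπ/m + x)·tan(jπ/m - x). -/
/-!
Writing `2i sin w = e^{-iw} (e^{2iw} - 1)`, the numbers `e^{2i(z + kπ/n)} = ζ^k e^{2iz}`,
`k < n`, are `e^{2iz}` times the `n`-th roots of unity, so `∏_{k<n} sin (z + kπ/n)` is, up to an
explicit phase, the factorisation of `1 - e^{2inz}`; this gives `sin (n z) / 2^(n-1)`.
For `n = 2m + 1`, pairing `k` with `n - k` yields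
`sin (n x) = 4^m sin x ∏_{j=1}^m sin (jπ/n + x) sin (jπ/n - x)`, the shift `x ↦ x + π/2` turns
it into the same formula for `cos`, and the tangent identity is the quotient of the two.
-/

open Finset Real

theorem IsPrimitiveRoot.pow_sub_pow_eq_prod_range_sub_pow_mul {R : Type*} [CommRing R]
    [IsDomain R] {ζ : R} {n : ℕ} (hζ : IsPrimitiveRoot ζ n) (hn : 0 < n) (x y : R) :
    x ^ n - y ^ n = ∏ k ∈ range n, (x - ζ ^ k * y) := by
  have : NeZero n := .of_pos hn
  rw [hζ.pow_sub_pow_eq_prod_sub_mul x y hn]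
  refine (prod_nbij (ζ ^ ·) (fun k _ ↦ ?_) (fun i hi j hj ↦ hζ.pow_inj (mem_range.1 hi)
    (mem_range.1 hj)) (fun μ hμ ↦ ?_) fun _ _ ↦ rfl).symm
  · rw [Polynomial.mem_nthRootsFinset hn, pow_right_comm, hζ.pow_eq_one, one_pow]
  · obtain ⟨k, hk, rfl⟩ := hζ.eq_pow_of_pow_eq_one ((Polynomial.mem_nthRootsFinset hn _).1 hμ)
    exact ⟨k, mem_range.2 hk, rfl⟩

theorem Finset.prod_range_two_mul_add_one {M : Type*} [CommMonoid M] (f : ℕ → M) (n : ℕ) :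
    ∏ k ∈ range (2 * n + 1), f k = f 0 * ∏ j ∈ Icc 1 n, f j * f (2 * n + 1 - j) := by
  have hlow : f 0 * ∏ j ∈ Icc 1 n, f j = ∏ k ∈ range (n + 1), f k := by
    rw [prod_range_succ', mul_comm, ← Ico_add_one_right_eq_Icc, prod_Ico_eq_prod_range,
      Nat.add_sub_cancel]
    simp only [add_comm 1]
  have hhigh : ∏ j ∈ Icc 1 n, f (2 * n + 1 - j) = ∏ k ∈ Ico (n + 1) (2 * n + 1), f k := by
    rw [← Ico_add_one_right_eq_Icc, prod_Ico_reflect f 1 (by omega)]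
    congr 2; omega
  rw [prod_mul_distrib, ← mul_assoc, hlow, hhigh, prod_range_mul_prod_Ico f (by omega)]

namespace Complex

theorem two_mul_I_mul_sin (w : ℂ) :
    2 * I * sin w = exp (-(w * I)) * (exp (2 * (w * I)) - 1) := by
  rw [mul_sub, ← exp_add, show -(w * I) + 2 * (w * I) = w * I by ring, mul_one]
  have h := two_sin w
  rw [neg_mul] at h
  linear_combination I * h + (exp (-(w * I)) - exp (w * I)) * I_sq

theorem sum_range_add_mul_pi_div (m : ℕ) (z : ℂ) :
    ∑ k ∈ range (m + 1), (z + k * π / (m + 1)) = (m + 1) * z + m * π / 2 := by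
  have hsum : ((∑ k ∈ range (m + 1), k : ℕ) : ℂ) * 2 = (m + 1) * m := by
    exact_mod_cast sum_range_id_mul_two (m + 1)
  rw [sum_add_distrib, sum_const, card_range, nsmul_eq_mul, ← sum_div, ← sum_mul]
  push_cast at hsum ⊢
  have : (m + 1 : ℂ) ≠ 0 := by exact_mod_cast m.succ_ne_zero
  field_simp
  linear_combination π * hsum

theorem two_mul_I_pow_mul_prod_range_sin (m : ℕ) (z : ℂ) :
    (2 * I) ^ (m + 1) * ∏ k ∈ range (m + 1), sin (z + k * π / (m + 1)) =
      exp (-(((m + 1) * z + m * π / 2) * I)) *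
        ((-1) ^ (m + 1) * (1 - exp (2 * (z * I)) ^ (m + 1))) := by
  set ζ := exp (2 * π * I / (m + 1))
  have hζ : IsPrimitiveRoot ζ (m + 1) := by
    have := isPrimitiveRoot_exp (m + 1) m.succ_ne_zero
    push_cast at this
    exact this
  set q := exp (2 * (z * I))
  have hfactor (k : ℕ) : exp (2 * ((z + k * π / (m + 1)) * I)) = ζ ^ k * q := by
    have : (m + 1 : ℂ) ≠ 0 := by exact_mod_cast m.succ_ne_zero
    rw [← exp_nat_mul, ← exp_add]
    congr 1
    field_simp
    ring
  have hroots : ∏ k ∈ range (m + 1), (ζ ^ k * q - 1) = (-1) ^ (m + 1) * (1 - q ^ (m + 1)) := by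
    have h := hζ.pow_sub_pow_eq_prod_range_sub_pow_mul m.succ_pos 1 q
    rw [one_pow] at h
    simp only [h, ← neg_sub (1 : ℂ), prod_neg, card_range]
  nth_rw 1 [← card_range (m + 1)]
  rw [pow_card_mul_prod]
  simp_rw [two_mul_I_mul_sin, hfactor]
  rw [prod_mul_distrib, ← exp_sum, sum_neg_distrib, ← sum_mul, sum_range_add_mul_pi_div, hroots]

theorem prod_range_sin_add_mul_pi_div {n : ℕ} (hn : n ≠ 0) (z : ℂ) :
    ∏ k ∈ range n, sin (z + k * π / n) = sin (n * z) / 2 ^ (n - 1) := by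
  obtain ⟨m, rfl⟩ := Nat.exists_eq_add_one_of_ne_zero hn
  push_cast
  have key := two_mul_I_pow_mul_prod_range_sin m z
  have hphase : exp (-(((m + 1) * z + m * π / 2) * I)) = exp (-((m + 1) * z * I)) * (-I) ^ m := by
    rw [show -I = exp (-(π / 2 * I)) by rw [exp_neg, exp_pi_div_two_mul_I, inv_I],
      ← exp_nat_mul, ← exp_add]
    congr 1
    ring
  have hpow : exp (2 * (z * I)) ^ (m + 1) = exp (2 * ((m + 1) * z * I)) := by
    rw [← exp_nat_mul]
    congr 1
    push_cast
    ring
  have hsin := two_mul_I_mul_sin ((m + 1) * z)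
  have hsign : ((-1 : ℂ) ^ m) ^ 2 = 1 := by rw [← pow_mul, pow_mul', neg_one_sq, one_pow]
  rw [hphase, hpow] at key
  rw [eq_div_iff (pow_ne_zero _ two_ne_zero)]
  -- both sides times `2 I · I^m` equal `I^m · 2 I sin ((m + 1) z)`, as `(-I)^m (-1)^m = I^m`
  refine mul_left_cancel₀ (mul_ne_zero (pow_ne_zero m I_ne_zero)
    (mul_ne_zero two_ne_zero I_ne_zero)) ?_
  linear_combination key - I ^ m * hsin +
    exp (-((m + 1) * z * I)) * (exp (2 * ((m + 1) * z * I)) - 1) * I ^ m * hsign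

end Complex

namespace Real

theorem prod_range_sin_add_mul_pi_div {n : ℕ} (hn : n ≠ 0) (x : ℝ) :
    ∏ k ∈ range n, sin (x + k * π / n) = sin (n * x) / 2 ^ (n - 1) := by
  exact_mod_cast Complex.prod_range_sin_add_mul_pi_div hn x

theorem sin_two_mul_add_one_mul (n : ℕ) (x : ℝ) :
    sin ((2 * n + 1) * x) = 4 ^ n * sin x *
      ∏ j ∈ Icc 1 n, sin (j * π / (2 * n + 1) + x) * sin (j * π / (2 * n + 1) - x) := by
  have h := prod_range_sin_add_mul_pi_div (by omega : 2 * n + 1 ≠ 0) x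
  rw [prod_range_two_mul_add_one] at h
  have hreflect : ∀ j ∈ Icc 1 n,
      sin (x + j * π / ↑(2 * n + 1)) * sin (x + ↑(2 * n + 1 - j) * π / ↑(2 * n + 1)) =
        sin (j * π / (2 * n + 1) + x) * sin (j * π / (2 * n + 1) - x) := by
    intro j hj
    have hm : (2 * n + 1 : ℝ) ≠ 0 := by positivity
    rw [Nat.cast_sub (by rw [mem_Icc] at hj; omega), ← sin_pi_sub (j * π / _ - x)]
    push_cast
    congr 2 <;> field_simp <;> ring
  rw [prod_congr rfl hreflect, Nat.add_sub_cancel, pow_mul, eq_div_iff (by positivity)] at h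
  push_cast at h
  rw [zero_mul, zero_div, add_zero] at h
  linear_combination -h

theorem cos_two_mul_add_one_mul (n : ℕ) (x : ℝ) :
    cos ((2 * n + 1) * x) = 4 ^ n * cos x *
      ∏ j ∈ Icc 1 n, cos (j * π / (2 * n + 1) + x) * cos (j * π / (2 * n + 1) - x) := by
  have h := sin_two_mul_add_one_mul n (x + π / 2)
  have hshift (a : ℝ) :
      sin (a + (x + π / 2)) * sin (a - (x + π / 2)) = -(cos (a + x) * cos (a - x)) := by
    rw [← add_assoc, sin_add_pi_div_two, sub_add_eq_sub_sub, sin_sub_pi_div_two]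
    ring
  rw [show (2 * n + 1) * (x + π / 2) = (2 * n + 1) * x + π / 2 + n * π by ring,
    sin_add_nat_mul_pi, sin_add_pi_div_two, sin_add_pi_div_two] at h
  simp only [hshift, prod_neg, Nat.card_Icc, Nat.add_sub_cancel] at h
  refine mul_left_cancel₀ (pow_ne_zero n (neg_ne_zero.2 one_ne_zero)) ?_
  linear_combination h

end Real

theorem stmt6_general (n : ℕ) (x : ℝ)
    (htx : Real.tan x ≠ 0) :
    Real.tan ((2 * n + 1) * x) / Real.tan x =
      ∏ j ∈ Finset.Icc 1 n,
        Real.tan (j * π / (2 * n + 1) + x) *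
          Real.tan (j * π / (2 * n + 1) - x) := by
  have hsin : sin x ≠ 0 := fun h ↦ htx (by rw [tan_eq_sin_div_cos, h, zero_div])
  have hcos : cos x ≠ 0 := fun h ↦ htx (by rw [tan_eq_sin_div_cos, h, div_zero])
  simp only [tan_eq_sin_div_cos, div_mul_div_comm, prod_div_distrib]
  rw [sin_two_mul_add_one_mul, cos_two_mul_add_one_mul, mul_div_mul_comm,
    mul_div_mul_left _ _ (by positivity), mul_div_cancel_left₀ _ (div_ne_zero hsin hcos)]

theorem stmt6 (n : ℕ) (x : ℝ)
    (hx : Real.cos x ≠ 0) (hmx : Real.cos ((2 * n + 1) * x) ≠ 0)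
    (htx : Real.tan x ≠ 0)
    (hj : ∀ j ∈ Finset.Icc 1 n,
      Real.cos (j * π / (2 * n + 1) + x) ≠ 0 ∧
      Real.cos (j * π / (2 * n + 1) - x) ≠ 0) :
    Real.tan ((2 * n + 1) * x) / Real.tan x =
      ∏ j ∈ Finset.Icc 1 n,
        Real.tan (j * π / (2 * n + 1) + x) *
          Real.tan (j * π / (2 * n + 1) - x) :=
  stmt6_general n x htx
end

section
/- 2·∫_0^{π/4} log(tan θ) dθ = 3·∫_0^{π/12} log(tan θ) dθ. -/
/-!
Write `J` and `I` for the integrals of `log ∘ tan` over `[0, π/4]` and `[0, π/12]`. Integrating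
`log tan 3θ = log tan θ + log tan (π/3 - θ) + log tan (π/3 + θ)` over `[0, π/12]` gives
`J / 3 = I + ∫_{π/4}^{5π/12} log tan`, and the antisymmetry `log tan (π/2 - θ) = -log tan θ`
turns the last integral into `-(J - I)`. Hence `J / 3 = 2 I - J`.
-/

open Real

namespace Real

/-- Also where `sin x` or `cos x` vanishes: both sides are then `0`, as `log 0 = 0 = log (±1)`. -/
theorem log_tan_eq_log_sin_sub_log_cos (x : ℝ) : log (tan x) = log (sin x) - log (cos x) := by
  have log_eq_zero_of_sq {c : ℝ} (h : c ^ 2 = 1) : log c = 0 :=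
    log_eq_zero.mpr (Or.inr (sq_eq_one_iff.mp h))
  rw [tan_eq_sin_div_cos]
  by_cases hs : sin x = 0
  · rw [hs, zero_div, log_zero, log_eq_zero_of_sq (by simpa [hs] using sin_sq_add_cos_sq x)]
    ring
  by_cases hc : cos x = 0
  · rw [hc, div_zero, log_zero, log_eq_zero_of_sq (by simpa [hc] using sin_sq_add_cos_sq x)]
    ring
  exact log_div hs hc

theorem intervalIntegrable_log_tan (a b : ℝ) :
    IntervalIntegrable (fun x => log (tan x)) MeasureTheory.volume a b := by
  simp_rw [log_tan_eq_log_sin_sub_log_cos]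
  exact intervalIntegrable_log_sin.sub intervalIntegrable_log_cos

theorem log_tan_pi_div_two_sub (x : ℝ) : log (tan (π / 2 - x)) = -log (tan x) := by
  rw [tan_pi_div_two_sub, log_inv]

theorem four_mul_sin_mul_sin_pi_div_three_sub_mul_sin_pi_div_three_add (x : ℝ) :
    4 * sin x * sin (π / 3 - x) * sin (π / 3 + x) = sin (3 * x) := by
  rw [sin_three_mul, sin_sub, sin_add, sin_pi_div_three, cos_pi_div_three]
  linear_combination (3 * sin x) * sin_sq_add_cos_sq x +
    (sin x * cos x ^ 2) * sq_sqrt (show (0:ℝ) ≤ 3 by norm_num)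

theorem four_mul_cos_mul_cos_pi_div_three_sub_mul_cos_pi_div_three_add (x : ℝ) :
    4 * cos x * cos (π / 3 - x) * cos (π / 3 + x) = cos (3 * x) := by
  rw [cos_three_mul, cos_sub, cos_add, sin_pi_div_three, cos_pi_div_three]
  linear_combination (-3 * cos x) * sin_sq_add_cos_sq x -
    (cos x * sin x ^ 2) * sq_sqrt (show (0:ℝ) ≤ 3 by norm_num)

theorem tan_three_mul_eq_mul (x : ℝ) :
    tan (3 * x) = tan x * tan (π / 3 - x) * tan (π / 3 + x) := by
  simp only [tan_eq_sin_div_cos, ← four_mul_sin_mul_sin_pi_div_three_sub_mul_sin_pi_div_three_add,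
    ← four_mul_cos_mul_cos_pi_div_three_sub_mul_cos_pi_div_three_add]
  ring

theorem log_tan_three_mul {x : ℝ} (hx₀ : 0 < x) (hx : x < π / 6) :
    log (tan (3 * x)) = log (tan x) + log (tan (π / 3 - x)) + log (tan (π / 3 + x)) := by
  have tan_ne_zero {y : ℝ} (hy₀ : 0 < y) (hy : y < π / 2) : tan y ≠ 0 :=
    (tan_pos_of_pos_of_lt_pi_div_two hy₀ hy).ne'
  have h₁ := tan_ne_zero hx₀ (by linarith)
  have h₂ := tan_ne_zero (y := π / 3 - x) (by linarith) (by linarith)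
  have h₃ := tan_ne_zero (y := π / 3 + x) (by linarith) (by linarith)
  rw [tan_three_mul_eq_mul, log_mul (mul_ne_zero h₁ h₂) h₃, log_mul h₁ h₂]

end Real

open intervalIntegral

theorem integral_log_tan_zero_three_mul {b : ℝ} (hb₀ : 0 ≤ b) (hb : b < π / 6) :
    ∫ x in 0..3 * b, log (tan x) =
      3 * ((∫ x in 0..b, log (tan x)) + ∫ x in (π / 3 - b)..(π / 3 + b), log (tan x)) := by
  have shift_sub : IntervalIntegrable (fun x => log (tan (π / 3 - x)))
      MeasureTheory.volume 0 b := by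
    simpa using (intervalIntegrable_log_tan (π / 3) (π / 3 - b)).comp_sub_left (π / 3)
  have shift_add : IntervalIntegrable (fun x => log (tan (π / 3 + x)))
      MeasureTheory.volume 0 b := by
    simpa using (intervalIntegrable_log_tan (π / 3) (π / 3 + b)).comp_add_left (π / 3)
  have triple : ∫ x in 0..b, log (tan (3 * x)) =
      ∫ x in 0..b, (log (tan x) + log (tan (π / 3 - x)) + log (tan (π / 3 + x))) := by
    refine integral_congr_ae (MeasureTheory.ae_of_all _ fun x hx => ?_)
    rw [Set.uIoc_of_le hb₀] at hx
    exact log_tan_three_mul hx.1 (by linarith [hx.2])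
  calc ∫ x in 0..3 * b, log (tan x)
      = 3 * ∫ x in 0..b, log (tan (3 * x)) := by
        rw [integral_comp_mul_left (fun x => log (tan x)) three_ne_zero, mul_zero, smul_eq_mul]
        ring
    _ = 3 * ((∫ x in 0..b, log (tan x)) + ∫ x in (π / 3 - b)..(π / 3 + b), log (tan x)) := by
        have log_tan := intervalIntegrable_log_tan
        rw [triple, integral_add ((log_tan 0 b).add shift_sub) shift_add,
          integral_add (log_tan 0 b) shift_sub, integral_comp_sub_left (fun x => log (tan x)),
          integral_comp_add_left (fun x => log (tan x)), sub_zero, add_zero, add_assoc,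
          integral_add_adjacent_intervals (log_tan _ _) (log_tan _ _)]

theorem integral_log_tan_reflect (a b : ℝ) :
    ∫ x in a..b, log (tan x) = -∫ x in (π / 2 - b)..(π / 2 - a), log (tan x) := by
  rw [← integral_neg, ← integral_comp_sub_left (fun x => -log (tan x)) (π / 2)]
  simp only [log_tan_pi_div_two_sub, neg_neg]

theorem stmt8 :
    2 * ∫ θ in (0:ℝ)..(π / 4), Real.log (Real.tan θ) =
      3 * ∫ θ in (0:ℝ)..(π / 12), Real.log (Real.tan θ) := by
  have triple := integral_log_tan_zero_three_mul (b := π / 12) (by positivity) (by linarith [pi_pos])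
  have reflect := integral_log_tan_reflect (π / 12) (π / 4)
  have split := integral_add_adjacent_intervals
    (intervalIntegrable_log_tan 0 (π / 12)) (intervalIntegrable_log_tan (π / 12) (π / 4))
  rw [show 3 * (π / 12) = π / 4 by ring, show π / 3 - π / 12 = π / 4 by ring,
    show π / 3 + π / 12 = 5 * π / 12 by ring] at triple
  rw [show π / 2 - π / 4 = π / 4 by ring, show π / 2 - π / 12 = 5 * π / 12 by ring] at reflect
  linarith
end

section
/- For each odd positive integer n and each j with 1 ≤ j ≤ n, the real number tan((2j-1)π/(8n+4)) is an algebraic unit, i.e., it is an algebraic integer whose multiplicative inverse is also an algebraic integer. -/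
open Real

/-!
With `ζ = exp (2iθ)` one has `tan θ = i (1 - ζ) / (1 + ζ)`, and for `θ = (2j - 1)π / (8n + 4)`
the number `ζ` satisfies `ζ ^ (4n + 2) = -1`. Whenever `ζ ^ m = -1` with `m` even, the geometric
sums `∑_{l ≤ m} (-ζ) ^ l` and `∑_{l ≤ m} ζ ^ l` are algebraic integers equal to `(1 - ζ) / (1 + ζ)`
and `(1 + ζ) / (1 - ζ)`, so `tan θ` and its inverse are algebraic integers.
-/

section GeomSum
open Finset
variable {R : Type*} [CommRing R] {ζ : R} {m : ℕ}

theorem one_add_mul_geom_sum_neg_of_pow_eq_neg_one (hm : Even m) (h : ζ ^ m = -1) :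
    (1 + ζ) * ∑ l ∈ range (m + 1), (-ζ) ^ l = 1 - ζ := by
  have := mul_neg_geom_sum (-ζ) (m + 1)
  rw [pow_succ, hm.neg_pow, h] at this
  linear_combination this

theorem one_sub_mul_geom_sum_of_pow_eq_neg_one (h : ζ ^ m = -1) :
    (1 - ζ) * ∑ l ∈ range (m + 1), ζ ^ l = 1 + ζ := by
  rw [mul_neg_geom_sum, pow_succ, h]
  ring

end GeomSum

section PowEqNegOne
variable {K : Type*} [Field K] [CharZero K] {ζ : K} {m : ℕ}

theorem isIntegral_of_pow_eq_neg_one (h : ζ ^ m = -1) : IsIntegral ℤ ζ := by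
  have hm : m ≠ 0 := by
    rintro rfl
    norm_num at h
  refine .of_pow (Nat.pos_of_ne_zero hm) ?_
  rw [h]
  exact isIntegral_one.neg

theorem one_sub_ne_zero_of_pow_eq_neg_one (h : ζ ^ m = -1) : 1 - ζ ≠ 0 := by
  rw [sub_ne_zero]
  rintro rfl
  norm_num at h

theorem one_add_ne_zero_of_pow_eq_neg_one (hm : Even m) (h : ζ ^ m = -1) : 1 + ζ ≠ 0 := by
  intro h0
  rw [eq_neg_of_add_eq_zero_right h0, hm.neg_one_pow] at h
  norm_num at h

theorem isIntegral_one_sub_div_one_add_of_pow_eq_neg_one (hm : Even m) (h : ζ ^ m = -1) :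
    IsIntegral ℤ ((1 - ζ) / (1 + ζ)) := by
  rw [← one_add_mul_geom_sum_neg_of_pow_eq_neg_one hm h,
    mul_div_cancel_left₀ _ (one_add_ne_zero_of_pow_eq_neg_one hm h)]
  exact IsIntegral.sum _ fun l _ ↦ (isIntegral_of_pow_eq_neg_one h).neg.pow l

theorem isIntegral_one_add_div_one_sub_of_pow_eq_neg_one (h : ζ ^ m = -1) :
    IsIntegral ℤ ((1 + ζ) / (1 - ζ)) := by
  rw [← one_sub_mul_geom_sum_of_pow_eq_neg_one h,
    mul_div_cancel_left₀ _ (one_sub_ne_zero_of_pow_eq_neg_one h)]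
  exact IsIntegral.sum _ fun l _ ↦ (isIntegral_of_pow_eq_neg_one h).pow l

end PowEqNegOne

namespace Complex

/-- Both sides are the junk value `0` when `cos z = 0`. -/
theorem tan_eq_I_mul_one_sub_exp_div_one_add_exp (z : ℂ) :
    tan z = I * ((1 - exp (2 * z * I)) / (1 + exp (2 * z * I))) := by
  have hsq : exp (2 * z * I) = exp (z * I) ^ 2 := by
    rw [← exp_nat_mul]; push_cast; ring_nf
  rw [tan_eq_sin_div_cos, sin, cos, hsq, neg_mul, exp_neg, ← mul_div_assoc,
    div_div_div_cancel_right₀ two_ne_zero, ← mul_div_mul_right _ _ (exp_ne_zero (z * I))]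
  congr 1 <;> field_simp; ring

theorem isIntegral_ofReal_iff {x : ℝ} : IsIntegral ℤ (x : ℂ) ↔ IsIntegral ℤ x :=
  isIntegral_algebraMap_iff (algebraMap ℝ ℂ).injective

theorem isIntegral_tan_of_exp_pow_eq_neg_one {z : ℂ} {m : ℕ} (hm : Even m)
    (h : exp (2 * z * I) ^ m = -1) : IsIntegral ℤ (tan z) ∧ IsIntegral ℤ (tan z)⁻¹ := by
  have hI : IsIntegral ℤ I := isIntegral_of_pow_eq_neg_one I_sq
  rw [tan_eq_I_mul_one_sub_exp_div_one_add_exp, mul_inv, inv_I, inv_div]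
  exact ⟨hI.mul (isIntegral_one_sub_div_one_add_of_pow_eq_neg_one hm h),
    hI.neg.mul (isIntegral_one_add_div_one_sub_of_pow_eq_neg_one h)⟩

end Complex

theorem stmt17_general (n : ℕ) (j : ℕ) :
    IsIntegral ℤ (Real.tan ((2 * j - 1) * π / (8 * n + 4))) ∧
    IsIntegral ℤ (Real.tan ((2 * j - 1) * π / (8 * n + 4)))⁻¹ := by
  set θ : ℝ := (2 * j - 1) * π / (8 * n + 4) with hθ
  have hθ_mul : (8 * n + 4 : ℂ) * θ = (2 * j - 1) * π := by
    have h4 : (8 * n + 4 : ℂ) ≠ 0 := by norm_cast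
    rw [hθ]
    push_cast
    field_simp
  have hexp : Complex.exp (2 * θ * Complex.I) ^ (2 * (2 * n + 1)) = -1 := by
    rw [← Complex.exp_nat_mul, show ((2 * (2 * n + 1) : ℕ) : ℂ) * (2 * θ * Complex.I) =
      j * (2 * π * Complex.I) - π * Complex.I by push_cast; linear_combination Complex.I * hθ_mul,
      Complex.exp_sub, Complex.exp_nat_mul_two_pi_mul_I, Complex.exp_pi_mul_I]
    norm_num
  rw [← Complex.isIntegral_ofReal_iff, ← Complex.isIntegral_ofReal_iff]
  push_cast
  exact Complex.isIntegral_tan_of_exp_pow_eq_neg_one (even_two_mul _) hexp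

theorem stmt17 (n : ℕ) (hn : Odd n) (hpos : 0 < n) (j : ℕ) (hj1 : 1 ≤ j) (hjn : j ≤ n) :
    IsIntegral ℤ (Real.tan ((2 * j - 1) * π / (8 * n + 4))) ∧
    IsIntegral ℤ (Real.tan ((2 * j - 1) * π / (8 * n + 4)))⁻¹ :=
  stmt17_general n j
end

section
/- The denesting identity tan(π/20)/tan³(3π/20) = (10 + √(50-22√5))/(10 - √(50-22√5)) holds. -/
/-!
Everything is expressed through `t = tan (π / 10)`, which satisfies `5 t² = 5 - 2√5` since
`cos (π / 5) = (1 + √5) / 4`. Then `tan (π / 5) = √5 t` by the double angle formula, and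
`tan (π / 4 - y) = (1 - tan y) / (1 + tan y)` gives `tan (3π / 20)` and `tan (π / 20)` in terms of
`t` and `√5`. The nested radical denests as `√(50 - 22√5) = (5 - √5) t`, and the claim becomes a
rational identity in `t` and `√5`, which holds modulo `5 t⁴ - 10 t² + 1 = 0`.
-/

open Real

namespace Real

theorem tan_pi_div_four_sub {y : ℝ} (hy : cos y ≠ 0) :
    tan (π / 4 - y) = (1 - tan y) / (1 + tan y) := by
  have h2 : √2 / 2 ≠ 0 := by positivity
  rw [tan_eq_sin_div_cos, sin_sub, cos_sub, sin_pi_div_four, cos_pi_div_four, ← mul_sub,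
    ← mul_add, mul_div_mul_left _ _ h2, tan_eq_sin_div_cos, ← div_div_div_cancel_right₀ hy,
    sub_div, add_div, div_self hy]

theorem cos_sq_pi_div_ten : cos (π / 10) ^ 2 = (5 + √5) / 8 := by
  rw [cos_sq, show 2 * (π / 10) = π / 5 by ring, cos_pi_div_five]
  ring

theorem five_mul_tan_sq_pi_div_ten : 5 * tan (π / 10) ^ 2 = 5 - 2 * √5 := by
  have h5 : √5 ^ 2 = 5 := sq_sqrt (by norm_num)
  rw [tan_eq_sin_div_cos, div_pow, sin_sq, cos_sq_pi_div_ten]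
  field_simp
  linear_combination 2 * h5

theorem tan_pi_div_ten_pos : 0 < tan (π / 10) :=
  tan_pos_of_pos_of_lt_pi_div_two (by positivity) (by linarith [pi_pos])

theorem tan_pi_div_five_eq_sqrt_five_mul_tan_pi_div_ten : tan (π / 5) = √5 * tan (π / 10) := by
  have h5 : √5 ^ 2 = 5 := sq_sqrt (by norm_num)
  have ht := five_mul_tan_sq_pi_div_ten
  have hden : 1 - tan (π / 10) ^ 2 ≠ 0 := by
    nlinarith [sqrt_pos.mpr (show (0 : ℝ) < 5 by norm_num)]
  rw [show π / 5 = 2 * (π / 10) by ring, tan_two_mul, div_eq_iff hden]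
  linear_combination (√5 * tan (π / 10) / 5) * ht - (2 * tan (π / 10) / 5) * h5

theorem sqrt_fifty_sub_twentytwo_mul_sqrt_five :
    √(50 - 22 * √5) = (5 - √5) * tan (π / 10) := by
  have h5 : √5 ^ 2 = 5 := sq_sqrt (by norm_num)
  have h5lt : √5 < 5 := by nlinarith [sqrt_nonneg 5]
  have hpos : 0 < (5 - √5) * tan (π / 10) := mul_pos (by linarith) tan_pi_div_ten_pos
  rw [sqrt_eq_iff_mul_self_eq_of_pos hpos]
  linear_combination ((5 - √5) ^ 2 / 5) * five_mul_tan_sq_pi_div_ten + (5 - 2 / 5 * √5) * h5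

end Real

theorem div_cube_eq_of_sq_eq_five {s t : ℝ} (hs : s ^ 2 = 5) (ht : 5 * t ^ 2 = 5 - 2 * s)
    (hs0 : 0 < s) (ht0 : 0 < t) :
    (1 - s * t) / (1 + s * t) / ((1 - t) / (1 + t)) ^ 3 =
      (10 + (5 - s) * t) / (10 - (5 - s) * t) := by
  have hquartic : 5 * t ^ 4 - 10 * t ^ 2 + 1 = 0 := by
    linear_combination ((5 * t ^ 2 - 5 - 2 * s) / 5) * ht + (4 / 5) * hs
  have ht2 : t ^ 2 < 1 := by linarith
  have ht1 : 0 < 1 - t := by nlinarith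
  obtain rfl : s = 5 * (1 - t ^ 2) / 2 := by linarith
  rw [div_pow, div_div_div_eq, div_eq_div_iff (by nlinarith) (by nlinarith)]
  linear_combination (t * (10 - 25 * t ^ 2 - 5 * t ^ 4) / 2) * hquartic

theorem stmt18 :
    Real.tan (π / 20) / (Real.tan (3 * π / 20)) ^ 3 =
      (10 + Real.sqrt (50 - 22 * Real.sqrt 5)) /
        (10 - Real.sqrt (50 - 22 * Real.sqrt 5)) := by
  have hcos (x : ℝ) (h0 : 0 < x) (h1 : x < π / 2) : cos x ≠ 0 :=
    (cos_pos_of_mem_Ioo ⟨by linarith, h1⟩).ne'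
  have hpi := pi_pos
  have h3 : tan (3 * π / 20) = (1 - tan (π / 10)) / (1 + tan (π / 10)) := by
    rw [show 3 * π / 20 = π / 4 - π / 10 by ring,
      tan_pi_div_four_sub (hcos _ (by positivity) (by linarith))]
  have h1 : tan (π / 20) = (1 - √5 * tan (π / 10)) / (1 + √5 * tan (π / 10)) := by
    rw [show π / 20 = π / 4 - π / 5 by ring,
      tan_pi_div_four_sub (hcos _ (by positivity) (by linarith)),
      tan_pi_div_five_eq_sqrt_five_mul_tan_pi_div_ten]
  rw [h1, h3, sqrt_fifty_sub_twentytwo_mul_sqrt_five]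
  exact div_cube_eq_of_sq_eq_five (sq_sqrt (by norm_num)) five_mul_tan_sq_pi_div_ten
    (sqrt_pos.mpr (by norm_num)) tan_pi_div_ten_pos
end

section
/- Catalan's constant satisfies G = (1/2)·∑_{k=0}^∞ 4^k / ((2k+1)^2·C(2k,k)). -/
/-!
Both sides are integrals over `(0, 1)`. Integrating the arctangent series termwise gives
`G = ∫₀¹ arctan u / u`. Writing `4 ^ k / ((2k+1) C(2k,k))` as half the Wallis integral
`∫₀^π sin ^ (2k+1)` and summing a geometric series under the integral sign gives
`arcsin x / (x √(1 - x²)) = ∑ 4 ^ k x ^ (2k) / ((2k+1) C(2k,k))`, so the right-hand side is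
`(1/2) ∫₀¹ arcsin x / (x √(1 - x²))`. The substitution `x = 2u / (1 + u²)`, under which
`arcsin x = 2 arctan u`, turns this into `∫₀¹ arctan u / u`. The series on the right converges
by Wallis' inequality `W k ≤ π / 2`, i.e. `4 ^ k / C(2k,k) ≤ √(π (2k+1) / 2)`.
-/

open Real MeasureTheory Set

lemma integral_Ioo_tsum_of_summable_integral_norm {a b : ℝ} {f : ℕ → ℝ → ℝ}
    (hf : ∀ k, Continuous (f k)) (hs : Summable fun k => ∫ x in Ioo a b, ‖f k x‖) :
    ∫ x in Ioo a b, ∑' k, f k x = ∑' k, ∫ x in Ioo a b, f k x :=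
  (integral_tsum_of_summable_integral_norm
    (fun k => (hf k).integrableOn_Icc.mono_set Ioo_subset_Icc_self) hs).symm

lemma integral_Ioo_tsum_of_nonneg {a b : ℝ} {f : ℕ → ℝ → ℝ}
    (hf : ∀ k, Continuous (f k)) (hf0 : ∀ k, ∀ x ∈ Ioo a b, 0 ≤ f k x)
    (hs : Summable fun k => ∫ x in Ioo a b, f k x) :
    ∫ x in Ioo a b, ∑' k, f k x = ∑' k, ∫ x in Ioo a b, f k x := by
  refine integral_Ioo_tsum_of_summable_integral_norm hf (hs.congr fun k => ?_)
  exact setIntegral_congr_fun measurableSet_Ioo fun x hx => (norm_of_nonneg (hf0 k x hx)).symm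

lemma integral_Ioo_eq_intervalIntegral {E : Type*} [NormedAddCommGroup E] [NormedSpace ℝ E]
    {a b : ℝ} (hab : a ≤ b) (f : ℝ → E) :
    ∫ x in Ioo a b, f x = ∫ x in a..b, f x := by
  rw [intervalIntegral.integral_of_le hab, integral_Ioc_eq_integral_Ioo]

lemma integral_Ioo_zero_one_pow (n : ℕ) : ∫ x in Ioo (0 : ℝ) 1, x ^ n = 1 / (n + 1) := by
  rw [integral_Ioo_eq_intervalIntegral zero_le_one, integral_pow]
  simp

/-- The coefficient of `x ^ (2k+1)` in `arcsin x / √(1 - x²)`. -/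
noncomputable def arcsinCoeff (k : ℕ) : ℝ := 4 ^ k / ((2 * k + 1) * Nat.centralBinom k)

lemma arcsinCoeff_pos (k : ℕ) : 0 < arcsinCoeff k := by
  unfold arcsinCoeff
  have := Nat.centralBinom_pos k
  positivity

lemma arcsinCoeff_succ (k : ℕ) :
    arcsinCoeff (k + 1) = arcsinCoeff k * ((2 * k + 2) / (2 * k + 3)) := by
  have hrec : ((k : ℝ) + 1) * Nat.centralBinom (k + 1) = 2 * (2 * k + 1) * Nat.centralBinom k :=
    mod_cast Nat.succ_mul_centralBinom_succ k
  have := Nat.centralBinom_pos k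
  have := Nat.centralBinom_pos (k + 1)
  unfold arcsinCoeff
  rw [div_mul_div_comm, div_eq_div_iff (by positivity) (by positivity)]
  push_cast
  linear_combination -2 * (4 : ℝ) ^ k * (2 * k + 3) * hrec

lemma arcsinCoeff_eq_half_integral_sin_pow (k : ℕ) :
    arcsinCoeff k = (∫ θ in 0..π, sin θ ^ (2 * k + 1)) / 2 := by
  rw [integral_sin_pow_odd, mul_div_cancel_left₀ _ two_ne_zero]
  induction k with
  | zero => simp [arcsinCoeff]
  | succ k ih => rw [arcsinCoeff_succ, ih, Finset.prod_range_succ]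

lemma arcsinCoeff_le_one (k : ℕ) : arcsinCoeff k ≤ 1 := by
  have h := integral_sin_pow_antitone (show 1 ≤ 2 * k + 1 by omega)
  rw [arcsinCoeff_eq_half_integral_sin_pow]
  norm_num at h ⊢
  linarith

lemma two_mul_add_one_mul_arcsinCoeff_sq (k : ℕ) :
    (2 * k + 1) * arcsinCoeff k ^ 2 = Real.Wallis.W k := by
  induction k with
  | zero => simp [arcsinCoeff, Real.Wallis.W]
  | succ k ih =>
    rw [Real.Wallis.W_succ, ← ih, arcsinCoeff_succ]
    push_cast
    field_simp
    ring

lemma arcsinCoeff_div_le (k : ℕ) :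
    arcsinCoeff k / (2 * k + 1) ≤ √(π / 2) * (1 / |(k : ℝ) + 1| ^ (3 / 2 : ℝ)) := by
  have hn : (0 : ℝ) < 2 * k + 1 := by positivity
  have hsq : arcsinCoeff k ^ 2 * (2 * k + 1) ≤ π / 2 := by
    rw [mul_comm, two_mul_add_one_mul_arcsinCoeff_sq]; exact Real.Wallis.W_le k
  have hbound : arcsinCoeff k * √(2 * k + 1) ≤ √(π / 2) := by
    rw [← sqrt_sq (arcsinCoeff_pos k).le, ← sqrt_mul (sq_nonneg _)]
    exact sqrt_le_sqrt hsq
  have hpow : (2 * (k : ℝ) + 1) ^ (3 / 2 : ℝ) = (2 * k + 1) * √(2 * k + 1) := by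
    rw [sqrt_eq_rpow, ← rpow_one_add' hn.le (by norm_num)]; norm_num
  have hmono : |(k : ℝ) + 1| ^ (3 / 2 : ℝ) ≤ (2 * k + 1) ^ (3 / 2 : ℝ) := by
    rw [abs_of_pos (by positivity)]
    exact rpow_le_rpow (by positivity) (by linarith [(k.cast_nonneg : (0 : ℝ) ≤ k)])
      (by norm_num)
  calc arcsinCoeff k / (2 * k + 1)
      = arcsinCoeff k * √(2 * k + 1) / (2 * (k : ℝ) + 1) ^ (3 / 2 : ℝ) := by
        rw [hpow]; field_simp
    _ ≤ √(π / 2) / (2 * (k : ℝ) + 1) ^ (3 / 2 : ℝ) := by gcongr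
    _ ≤ √(π / 2) * (1 / |(k : ℝ) + 1| ^ (3 / 2 : ℝ)) := by
        rw [← div_eq_mul_one_div]; gcongr

lemma summable_arcsinCoeff_div : Summable fun k : ℕ => arcsinCoeff k / (2 * k + 1) :=
  .of_nonneg_of_le (fun k => (div_pos (arcsinCoeff_pos k) (by positivity)).le) arcsinCoeff_div_le
    (((summable_one_div_nat_add_rpow 1 _).2 (by norm_num)).mul_left _)

lemma integral_sin_div_one_sub_sq_mul_sin_sq {x : ℝ} (hx0 : 0 < x) (hx1 : x < 1) :
    ∫ θ in 0..π, sin θ / (1 - x ^ 2 * sin θ ^ 2) = 2 * arcsin x / (x * √(1 - x ^ 2)) := by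
  have hc2 : √(1 - x ^ 2) ^ 2 = 1 - x ^ 2 := sq_sqrt (by nlinarith)
  set c := √(1 - x ^ 2)
  have hc : 0 < c := sqrt_pos.2 (by nlinarith)
  have hden : ∀ θ, 0 < 1 - x ^ 2 * sin θ ^ 2 := fun θ => by nlinarith [sin_sq_le_one θ]
  have hderiv : ∀ θ ∈ uIcc 0 π, HasDerivAt (fun t => -(arctan (x * cos t / c) / (x * c)))
      (sin θ / (1 - x ^ 2 * sin θ ^ 2)) θ := by
    intro θ _
    have h := ((((hasDerivAt_cos θ).const_mul x).div_const c).arctan.div_const (x * c)).neg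
    refine h.congr_deriv ?_
    have hne := (hden θ).ne'
    have : 1 + (x * cos θ / c) ^ 2 = (1 - x ^ 2 * sin θ ^ 2) / c ^ 2 := by
      field_simp
      linear_combination hc2 + x ^ 2 * cos_sq' θ
    rw [this]
    field_simp
  have hcont : Continuous fun θ => sin θ / (1 - x ^ 2 * sin θ ^ 2) :=
    (continuous_sin.div (by fun_prop) fun θ => (hden θ).ne')
  rw [intervalIntegral.integral_eq_sub_of_hasDerivAt hderiv (hcont.intervalIntegrable 0 π),
    arcsin_eq_arctan ⟨by linarith, hx1⟩]
  simp only [cos_pi, cos_zero, mul_neg_one, mul_one, neg_div, arctan_neg]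
  ring

lemma hasSum_arcsinCoeff_mul_pow {x : ℝ} (hx0 : 0 < x) (hx1 : x < 1) :
    HasSum (fun k : ℕ => arcsinCoeff k * x ^ (2 * k)) (arcsin x / (x * √(1 - x ^ 2))) := by
  have hx2 : x ^ 2 < 1 := by nlinarith
  have hsum : Summable fun k : ℕ => arcsinCoeff k * x ^ (2 * k) := by
    refine .of_nonneg_of_le (fun k => by have := arcsinCoeff_pos k; positivity) (fun k => ?_)
      (summable_geometric_of_lt_one (sq_nonneg x) hx2)
    rw [pow_mul]
    exact mul_le_of_le_one_left (by positivity) (arcsinCoeff_le_one k)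
  refine hsum.hasSum_iff.2 ?_
  set F : ℕ → ℝ → ℝ := fun k θ => x ^ (2 * k) / 2 * sin θ ^ (2 * k + 1)
  have hF : ∀ k, ∫ θ in Ioo 0 π, F k θ = arcsinCoeff k * x ^ (2 * k) := fun k => by
    rw [integral_Ioo_eq_intervalIntegral pi_pos.le, intervalIntegral.integral_const_mul,
      arcsinCoeff_eq_half_integral_sin_pow]
    ring
  have hgeom : ∀ θ, ∑' k, F k θ = sin θ / (1 - x ^ 2 * sin θ ^ 2) / 2 := fun θ => by
    have hq : (x * sin θ) ^ 2 < 1 := by nlinarith [sin_sq_le_one θ]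
    have hF' : ∀ k, F k θ = sin θ / 2 * ((x * sin θ) ^ 2) ^ k := fun k => by ring
    simp only [hF', tsum_mul_left, tsum_geometric_of_lt_one (sq_nonneg _) hq]
    ring
  have hF0 : ∀ k, ∀ θ ∈ Ioo 0 π, 0 ≤ F k θ := fun k θ hθ => by
    have := sin_pos_of_pos_of_lt_pi hθ.1 hθ.2
    positivity
  calc ∑' k, arcsinCoeff k * x ^ (2 * k)
      = ∫ θ in Ioo 0 π, ∑' k, F k θ := by
        rw [integral_Ioo_tsum_of_nonneg (fun k => by fun_prop) hF0
          (by simpa only [hF] using hsum)]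
        simp only [hF]
    _ = arcsin x / (x * √(1 - x ^ 2)) := by
        simp only [hgeom]
        rw [integral_Ioo_eq_intervalIntegral pi_pos.le, intervalIntegral.integral_div,
          integral_sin_div_one_sub_sq_mul_sin_sq hx0 hx1]
        ring

lemma tsum_arcsinCoeff_div_eq_integral :
    ∑' k : ℕ, arcsinCoeff k / (2 * k + 1)
      = ∫ x in Ioo 0 1, arcsin x / (x * √(1 - x ^ 2)) := by
  have hG : ∀ k : ℕ, ∫ x in Ioo (0 : ℝ) 1, arcsinCoeff k * x ^ (2 * k)
      = arcsinCoeff k / (2 * k + 1) := fun k => by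
    rw [integral_const_mul, integral_Ioo_zero_one_pow]
    push_cast
    ring
  have hG0 : ∀ k : ℕ, ∀ x ∈ Ioo (0 : ℝ) 1, 0 ≤ arcsinCoeff k * x ^ (2 * k) :=
    fun k x _ => mul_nonneg (arcsinCoeff_pos k).le (pow_mul x 2 k ▸ by positivity)
  rw [← setIntegral_congr_fun measurableSet_Ioo
      fun x hx => (hasSum_arcsinCoeff_mul_pow hx.1 hx.2).tsum_eq,
    integral_Ioo_tsum_of_nonneg (fun k => by fun_prop) hG0
      (by simpa only [hG] using summable_arcsinCoeff_div)]
  simp only [hG]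

lemma tsum_neg_one_pow_div_sq_eq_integral :
    ∑' k : ℕ, (-1 : ℝ) ^ k / (2 * k + 1) ^ 2 = ∫ u in Ioo 0 1, arctan u / u := by
  have hf : ∀ k : ℕ, ∫ u in Ioo (0 : ℝ) 1, (-1) ^ k * (u ^ (2 * k) / (2 * k + 1))
      = (-1 : ℝ) ^ k / (2 * k + 1) ^ 2 := fun k => by
    simp only [integral_const_mul, integral_div, integral_Ioo_zero_one_pow]
    push_cast
    field_simp
  have hnorm : ∀ k : ℕ, ∫ u in Ioo (0 : ℝ) 1, ‖(-1) ^ k * (u ^ (2 * k) / (2 * k + 1))‖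
      = 1 / (2 * k + 1) ^ 2 := fun k => by
    have : ∀ u : ℝ, ‖(-1) ^ k * (u ^ (2 * k) / (2 * k + 1))‖ = u ^ (2 * k) / (2 * k + 1) :=
      fun u => by
        rw [norm_mul, norm_pow, norm_neg, norm_one, one_pow, one_mul, norm_of_nonneg]
        rw [pow_mul]; positivity
    simp only [this, integral_div, integral_Ioo_zero_one_pow]
    push_cast
    field_simp
  have hsummable : Summable fun k : ℕ => 1 / (2 * (k : ℝ) + 1) ^ 2 := by
    refine .of_nonneg_of_le (fun k => by positivity) (fun k => ?_)
      ((summable_one_div_nat_add_rpow 1 2).2 one_lt_two)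
    rw [abs_of_pos (by positivity), rpow_two]
    gcongr
    linarith [(k.cast_nonneg : (0 : ℝ) ≤ k)]
  have harctan : ∀ u ∈ Ioo (0 : ℝ) 1,
      arctan u / u = ∑' k : ℕ, (-1) ^ k * (u ^ (2 * k) / (2 * k + 1)) := fun u hu => by
    have hu0 : u ≠ 0 := hu.1.ne'
    have hu1 : ‖u‖ < 1 := by rw [norm_of_nonneg hu.1.le]; exact hu.2
    rw [← ((hasSum_arctan hu1).div_const u).tsum_eq]
    congr 1; ext k
    field_simp
    push_cast
    ring
  rw [setIntegral_congr_fun measurableSet_Ioo harctan,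
    integral_Ioo_tsum_of_summable_integral_norm (fun k => by fun_prop)
      (by simpa only [hnorm] using hsummable)]
  simp only [hf]

lemma sqrt_one_sub_sq_two_mul_div_one_add_sq {u : ℝ} (hu : |u| ≤ 1) :
    √(1 - (2 * u / (1 + u ^ 2)) ^ 2) = (1 - u ^ 2) / (1 + u ^ 2) := by
  have h : 1 - (2 * u / (1 + u ^ 2)) ^ 2 = ((1 - u ^ 2) / (1 + u ^ 2)) ^ 2 := by
    field_simp; ring
  have : u ^ 2 ≤ 1 := by rw [← sq_abs]; nlinarith [abs_nonneg u]
  rw [h, sqrt_sq (div_nonneg (by linarith) (by positivity))]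

lemma arcsin_two_mul_div_one_add_sq {u : ℝ} (h₁ : -1 < u) (h₂ : u < 1) :
    arcsin (2 * u / (1 + u ^ 2)) = 2 * arctan u := by
  have hu2 : u ^ 2 < 1 := by nlinarith
  have hmem : 2 * u / (1 + u ^ 2) ∈ Ioo (-1 : ℝ) 1 := by
    constructor
    · rw [lt_div_iff₀ (by positivity)]; nlinarith [sq_nonneg (u + 1)]
    · rw [div_lt_one (by positivity)]; nlinarith [sq_nonneg (u - 1)]
  rw [arcsin_eq_arctan hmem, two_mul_arctan h₁ h₂,
    sqrt_one_sub_sq_two_mul_div_one_add_sq (abs_le.2 ⟨h₁.le, h₂.le⟩)]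
  congr 1
  field_simp

lemma integral_arcsin_div_eq_integral_arctan_div :
    ∫ x in Ioo 0 1, arcsin x / (x * √(1 - x ^ 2)) = ∫ u in Ioo 0 1, 2 * (arctan u / u) := by
  set g : ℝ → ℝ := fun u => 2 * u / (1 + u ^ 2)
  have hderiv : ∀ u ∈ Ioo (0 : ℝ) 1,
      HasDerivWithinAt g (2 * (1 - u ^ 2) / (1 + u ^ 2) ^ 2) (Ioo 0 1) u := fun u _ => by
    have h := ((hasDerivAt_id' u).const_mul 2).div ((hasDerivAt_pow 2 u).const_add 1)
      (by positivity)
    refine (h.congr_deriv ?_).hasDerivWithinAt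
    field_simp
    ring
  have hinj : InjOn g (Ioo 0 1) := fun a ha b hb hab => by
    have ha2 : (1 : ℝ) + a ^ 2 ≠ 0 := by positivity
    have hb2 : (1 : ℝ) + b ^ 2 ≠ 0 := by positivity
    rw [div_eq_div_iff ha2 hb2] at hab
    have : (a - b) * (1 - a * b) = 0 := by linear_combination hab / 2
    rcases mul_eq_zero.1 this with h | h
    · linarith
    · nlinarith [ha.1, ha.2, hb.1, hb.2]
  have himage : g '' Ioo 0 1 = Ioo 0 1 := by
    refine Subset.antisymm ?_ ?_
    · rintro _ ⟨u, ⟨hu0, hu1⟩, rfl⟩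
      refine ⟨by positivity, ?_⟩
      rw [div_lt_one (by positivity)]; nlinarith
    · have hg : ContinuousOn g (Icc 0 1) :=
        (Continuous.div (by fun_prop) (by fun_prop) fun u => by positivity).continuousOn
      simpa [g, one_add_one_eq_two] using intermediate_value_Ioo zero_le_one hg
  conv_lhs =>
    rw [← himage, integral_image_eq_integral_abs_deriv_smul measurableSet_Ioo hderiv hinj]
  refine setIntegral_congr_fun measurableSet_Ioo fun u ⟨hu0, hu1⟩ => ?_
  have hu2 : 0 < 1 - u ^ 2 := by nlinarith
  have hderiv_pos : 0 < 2 * (1 - u ^ 2) / (1 + u ^ 2) ^ 2 := by positivity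
  simp only [g, smul_eq_mul, abs_of_pos hderiv_pos,
    arcsin_two_mul_div_one_add_sq (by linarith) hu1,
    sqrt_one_sub_sq_two_mul_div_one_add_sq (abs_le.2 ⟨by linarith, hu1.le⟩)]
  field_simp

theorem stmt19 :
    (∑' k : ℕ, (-1 : ℝ) ^ k / (2 * k + 1) ^ 2) =
      (1 / 2) * ∑' k : ℕ,
        (4 : ℝ) ^ k / ((2 * k + 1) ^ 2 * (Nat.choose (2 * k) k : ℝ)) := by
  have hterm : ∀ k : ℕ, (4 : ℝ) ^ k / ((2 * k + 1) ^ 2 * (Nat.choose (2 * k) k : ℝ))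
      = arcsinCoeff k / (2 * k + 1) := fun k => by
    rw [arcsinCoeff, ← Nat.centralBinom_eq_two_mul_choose]
    field_simp
  simp only [hterm, tsum_arcsinCoeff_div_eq_integral, integral_arcsin_div_eq_integral_arctan_div,
    integral_const_mul, tsum_neg_one_pow_div_sq_eq_integral]
  ring
end
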